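/- arXiv:2510.19643 — 9 statements merged into one kernel-verified Lean document; each statement's English description precedes it below -/
import Mathlib

section
/- For every bounded m-measurable g : Ω → ℝ, one has the exact decomposition ∫ ρ·(ξ − g)² dP = ∫ ρ·(ξ − μ)² dP + ∫ ω·(μ − g)² dP. In particular, the weighted population risk g ↦ E[ρ(ξ − g)²] differs from the overlap-weighted oracle risk g ↦ E[ω(μ − g)²] by a constant not depending on g, so the two risks have the same minimizers (Theorem 1, weighted population risk, CAPO case). -/
open MeasureTheory

/-- Integrability from a uniform bound on a probability measure. -/
lemma integrable_of_bd {Ω : Type*} {F : MeasurableSpace Ω} {P : Measure Ω}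
    [IsProbabilityMeasure P] {f : Ω → ℝ} (hf : Measurable[F] f) (C : ℝ)
    (hbd : ∀ᵐ x ∂P, |f x| ≤ C) : Integrable f P := by
  refine (integrable_const C).mono' hf.aestronglyMeasurable ?_
  filter_upwards [hbd] with x hx
  simpa [Real.norm_eq_abs] using hx

/-- For `φ` bounded `m`-measurable and `h` bounded measurable,
`∫ φ·h = ∫ φ·E[h|m]`. -/
lemma integral_mul_eq_integral_mul_condExp {Ω : Type*} {F : MeasurableSpace Ω}
    {P : Measure Ω} [IsProbabilityMeasure P] {m : MeasurableSpace Ω} (hm : m ≤ F)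
    {φ h : Ω → ℝ} (hφ : Measurable[m] φ) (Cφ : ℝ) (hφ_bd : ∀ x, |φ x| ≤ Cφ)
    (hh : Measurable[F] h) (Ch : ℝ) (hh_bd : ∀ x, |h x| ≤ Ch) :
    ∫ x, φ x * h x ∂P = ∫ x, φ x * (P[h|m]) x ∂P := by
  have hφF : Measurable[F] φ := hφ.mono hm le_rfl
  have hprod : Integrable (φ * h) P := by
    refine integrable_of_bd (hφF.mul hh) (Cφ * Ch) (ae_of_all _ fun x => ?_)
    calc |φ x * h x| = |φ x| * |h x| := abs_mul _ _
      _ ≤ Cφ * Ch := by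
        have h0 : (0:ℝ) ≤ |φ x| := abs_nonneg _
        have h1 : (0:ℝ) ≤ |h x| := abs_nonneg _
        exact mul_le_mul (hφ_bd x) (hh_bd x) h1 ((h0.trans (hφ_bd x)))
  have hhint : Integrable h P := integrable_of_bd hh Ch (ae_of_all _ hh_bd)
  have hpull : P[φ * h|m] =ᵐ[P] φ * P[h|m] :=
    condExp_mul_of_stronglyMeasurable_left hφ.stronglyMeasurable hprod hhint
  calc ∫ x, φ x * h x ∂P = ∫ x, (φ * h) x ∂P := rfl
    _ = ∫ x, (P[φ * h|m]) x ∂P := (integral_condExp hm).symm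
    _ = ∫ x, (φ * P[h|m]) x ∂P := integral_congr_ae hpull
    _ = ∫ x, φ x * (P[h|m]) x ∂P := rfl

/-- **Theorem 1 (weighted population risk, CAPO case).**
On a probability space `(Ω, 𝔉, P)` with a sub-σ-algebra `m ≤ 𝔉`, let `ρ, γ` be bounded
random variables and `μ, ω` bounded `m`-measurable random variables with
`E[ρ | m] = ω` and `E[γ | m] = μ` almost surely, and `|ρ| ≥ ε > 0` a.s.
With the WO pseudo-outcome `ξ := μ + (ω/ρ)·(γ − μ)`, for every bounded `m`-measurable `g`
one has the exact decomposition
`∫ ρ·(ξ − g)² dP = ∫ ρ·(ξ − μ)² dP + ∫ ω·(μ − g)² dP`,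
so the weighted population risk and the overlap-weighted oracle risk differ by a
constant not depending on `g` and have the same minimizers. -/
theorem weighted_population_risk_CAPO
    {Ω : Type*} {m : MeasurableSpace Ω} {F : MeasurableSpace Ω} {P : Measure Ω} [IsProbabilityMeasure P]
    (hm : m ≤ F)
    (ρ γ μ ω : Ω → ℝ)
    (hρ_meas : Measurable ρ) (hγ_meas : Measurable γ)
    (hμ_meas : Measurable[m] μ) (hω_meas : Measurable[m] ω)
    (Cρ Cγ Cμ Cω : ℝ)
    (hρ_bd : ∀ x, |ρ x| ≤ Cρ) (hγ_bd : ∀ x, |γ x| ≤ Cγ)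
    (hμ_bd : ∀ x, |μ x| ≤ Cμ) (hω_bd : ∀ x, |ω x| ≤ Cω)
    (hρ_ce : P[ρ | m] =ᵐ[P] ω) (hγ_ce : P[γ | m] =ᵐ[P] μ)
    (ε : ℝ) (hε : 0 < ε) (hρ_lb : ∀ᵐ x ∂P, ε ≤ |ρ x|)
    (ξ : Ω → ℝ) (hξ : ξ = fun x => μ x + (ω x / ρ x) * (γ x - μ x))
    (g : Ω → ℝ) (hg_meas : Measurable[m] g) (Cg : ℝ) (hg_bd : ∀ x, |g x| ≤ Cg) :
    ∫ x, ρ x * (ξ x - g x) ^ 2 ∂P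
      = ∫ x, ρ x * (ξ x - μ x) ^ 2 ∂P + ∫ x, ω x * (μ x - g x) ^ 2 ∂P := by
  have hρF : Measurable[F] ρ := hρ_meas
  have hγF : Measurable[F] γ := hγ_meas
  have hμF : Measurable[F] μ := hμ_meas.mono hm le_rfl
  have hωF : Measurable[F] ω := hω_meas.mono hm le_rfl
  have hgF : Measurable[F] g := hg_meas.mono hm le_rfl
  have hξ_meas : Measurable[F] ξ := by
    rw [hξ]; exact hμF.add (((hωF.div hρF)).mul (hγF.sub hμF))
  -- a.e. bound on ξ
  set B : ℝ := Cμ + (Cω / ε) * (Cγ + Cμ) with hB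
  have hξ_bd : ∀ᵐ x ∂P, |ξ x| ≤ B := by
    filter_upwards [hρ_lb] with x hx
    have hρ0 : (0:ℝ) < |ρ x| := lt_of_lt_of_le hε hx
    have hdiv : |ω x / ρ x| ≤ Cω / ε := by
      rw [abs_div]
      exact div_le_div₀ (le_trans (abs_nonneg _) (hω_bd x)) (hω_bd x) hε hx
    have h1 : |γ x - μ x| ≤ Cγ + Cμ :=
      (abs_sub (γ x) (μ x)).trans (add_le_add (hγ_bd x) (hμ_bd x))
    rw [hξ]
    calc |μ x + ω x / ρ x * (γ x - μ x)|
        ≤ |μ x| + |ω x / ρ x * (γ x - μ x)| := abs_add_le _ _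
      _ ≤ Cμ + (Cω / ε) * (Cγ + Cμ) := by
          refine add_le_add (hμ_bd x) ?_
          rw [abs_mul]
          exact mul_le_mul hdiv h1 (abs_nonneg _)
            (div_nonneg (le_trans (abs_nonneg _) (hω_bd x)) hε.le)
  obtain ⟨x0, -⟩ := hρ_lb.exists
  have hCρ0 : (0:ℝ) ≤ Cρ := le_trans (abs_nonneg _) (hρ_bd x0)
  have hCω0 : (0:ℝ) ≤ Cω := le_trans (abs_nonneg _) (hω_bd x0)
  have hCμ0 : (0:ℝ) ≤ Cμ := le_trans (abs_nonneg _) (hμ_bd x0)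
  have hCg0 : (0:ℝ) ≤ Cg := le_trans (abs_nonneg _) (hg_bd x0)
  -- key a.e. identity:
  -- ρ(ξ-g)² = ρ(ξ-μ)² + 2·(ω(μ-g))·(γ-μ) + ρ(μ-g)²  a.e.
  have key : ∀ᵐ x ∂P,
      ρ x * (ξ x - g x) ^ 2
        = ρ x * (ξ x - μ x) ^ 2 + 2 * (ω x * (μ x - g x)) * (γ x - μ x)
            + ρ x * (μ x - g x) ^ 2 := by
    filter_upwards [hρ_lb] with x hx
    have hρne : ρ x ≠ 0 := by
      intro h0; rw [h0, abs_zero] at hx; exact absurd hx (not_le.mpr hε)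
    have hξx : ξ x - μ x = ω x / ρ x * (γ x - μ x) := by rw [hξ]; ring
    have hcross : ρ x * (ξ x - μ x) = ω x * (γ x - μ x) := by
      rw [hξx]; field_simp
    have : ξ x - g x = (ξ x - μ x) + (μ x - g x) := by ring
    rw [this]
    have expand : ρ x * ((ξ x - μ x) + (μ x - g x)) ^ 2
        = ρ x * (ξ x - μ x) ^ 2 + 2 * (ρ x * (ξ x - μ x)) * (μ x - g x)
          + ρ x * (μ x - g x) ^ 2 := by ring
    rw [expand, hcross]; ring
  -- integrability of the three pieces
  have hf1_meas : Measurable[F] fun x => ρ x * (ξ x - μ x) ^ 2 :=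
    hρF.mul ((hξ_meas.sub hμF).pow_const 2)
  have hf1_int : Integrable (fun x => ρ x * (ξ x - μ x) ^ 2) P := by
    refine integrable_of_bd hf1_meas (Cρ * (B + Cμ) ^ 2) ?_
    filter_upwards [hξ_bd] with x hx
    have h1 : |ξ x - μ x| ≤ B + Cμ := (abs_sub _ _).trans (add_le_add hx (hμ_bd x))
    rw [abs_mul, abs_pow]
    exact mul_le_mul (hρ_bd x) (pow_le_pow_left₀ (abs_nonneg _) h1 2)
      (pow_nonneg (abs_nonneg _) 2) hCρ0
  have hcross_meas : Measurable[F] fun x => 2 * (ω x * (μ x - g x)) * (γ x - μ x) :=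
    ((measurable_const.mul (hωF.mul (hμF.sub hgF))).mul (hγF.sub hμF))
  have hcross_int : Integrable (fun x => 2 * (ω x * (μ x - g x)) * (γ x - μ x)) P := by
    refine integrable_of_bd hcross_meas (2 * (Cω * (Cμ + Cg)) * (Cγ + Cμ))
      (ae_of_all _ fun x => ?_)
    have h1 : |ω x * (μ x - g x)| ≤ Cω * (Cμ + Cg) := by
      rw [abs_mul]
      exact mul_le_mul (hω_bd x) ((abs_sub _ _).trans (add_le_add (hμ_bd x) (hg_bd x)))
        (abs_nonneg _) (le_trans (abs_nonneg _) (hω_bd x))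
    have h2 : |γ x - μ x| ≤ Cγ + Cμ :=
      (abs_sub _ _).trans (add_le_add (hγ_bd x) (hμ_bd x))
    calc |2 * (ω x * (μ x - g x)) * (γ x - μ x)|
        = 2 * |ω x * (μ x - g x)| * |γ x - μ x| := by
          rw [abs_mul, abs_mul, abs_two]
      _ ≤ 2 * (Cω * (Cμ + Cg)) * (Cγ + Cμ) := by
          refine mul_le_mul (by linarith) h2 (abs_nonneg _) ?_
          have : (0:ℝ) ≤ Cω * (Cμ + Cg) := mul_nonneg hCω0 (by linarith)
          linarith
  have hf3_meas : Measurable[F] fun x => ρ x * (μ x - g x) ^ 2 :=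
    hρF.mul ((hμF.sub hgF).pow_const 2)
  have hf3_int : Integrable (fun x => ρ x * (μ x - g x) ^ 2) P := by
    refine integrable_of_bd hf3_meas (Cρ * (Cμ + Cg) ^ 2) (ae_of_all _ fun x => ?_)
    rw [abs_mul, abs_pow]
    exact mul_le_mul (hρ_bd x)
      (pow_le_pow_left₀ (abs_nonneg _)
        ((abs_sub _ _).trans (add_le_add (hμ_bd x) (hg_bd x))) 2)
      (pow_nonneg (abs_nonneg _) 2) hCρ0
  -- cross term vanishes
  have hcross_zero : ∫ x, 2 * (ω x * (μ x - g x)) * (γ x - μ x) ∂P = 0 := by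
    have hφ : Measurable[m] fun x => 2 * (ω x * (μ x - g x)) :=
      measurable_const.mul (hω_meas.mul (hμ_meas.sub hg_meas))
    have hφ_bd : ∀ x, |2 * (ω x * (μ x - g x))| ≤ 2 * (Cω * (Cμ + Cg)) := by
      intro x
      rw [abs_mul, abs_two]
      refine mul_le_mul_of_nonneg_left ?_ (by norm_num)
      rw [abs_mul]
      exact mul_le_mul (hω_bd x) ((abs_sub _ _).trans (add_le_add (hμ_bd x) (hg_bd x)))
        (abs_nonneg _) (le_trans (abs_nonneg _) (hω_bd x))
    have hh_bd : ∀ x, |γ x - μ x| ≤ Cγ + Cμ := fun x =>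
      (abs_sub _ _).trans (add_le_add (hγ_bd x) (hμ_bd x))
    have := integral_mul_eq_integral_mul_condExp (P := P) (h := fun x => γ x - μ x) hm hφ (2 * (Cω * (Cμ + Cg))) hφ_bd
      (hγF.sub hμF) (Cγ + Cμ) hh_bd
    rw [this]
    have hce : P[(fun x => γ x - μ x)|m] =ᵐ[P] fun _ => 0 := by
      have hγint : Integrable γ P := integrable_of_bd hγF Cγ (ae_of_all _ hγ_bd)
      have hμint : Integrable μ P := integrable_of_bd hμF Cμ (ae_of_all _ hμ_bd)
      have h1 : P[(fun x => γ x - μ x)|m] =ᵐ[P] P[γ|m] - P[μ|m] :=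
        condExp_sub hγint hμint m
      have h2 : P[μ|m] =ᵐ[P] μ := Filter.EventuallyEq.of_eq
        (condExp_of_stronglyMeasurable hm hμ_meas.stronglyMeasurable hμint)
      filter_upwards [h1, h2, hγ_ce] with x e1 e2 e3
      simp only [e1, Pi.sub_apply, e2, e3, sub_self]
    calc ∫ x, 2 * (ω x * (μ x - g x)) * (P[(fun x => γ x - μ x)|m]) x ∂P
        = ∫ x, (0:ℝ) ∂P := by
          refine integral_congr_ae ?_
          filter_upwards [hce] with x e
          rw [e, mul_zero]
      _ = 0 := integral_zero _ _
  -- third term equals overlap-weighted term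
  have hthird : ∫ x, ρ x * (μ x - g x) ^ 2 ∂P = ∫ x, ω x * (μ x - g x) ^ 2 ∂P := by
    have hφ : Measurable[m] fun x => (μ x - g x) ^ 2 :=
      (hμ_meas.sub hg_meas).pow_const 2
    have hφ_bd : ∀ x, |(μ x - g x) ^ 2| ≤ (Cμ + Cg) ^ 2 := fun x => by
      rw [abs_pow]
      exact pow_le_pow_left₀ (abs_nonneg _)
        ((abs_sub _ _).trans (add_le_add (hμ_bd x) (hg_bd x))) 2
    have h := integral_mul_eq_integral_mul_condExp (P := P) hm hφ ((Cμ + Cg) ^ 2) hφ_bd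
      hρF Cρ hρ_bd
    calc ∫ x, ρ x * (μ x - g x) ^ 2 ∂P
        = ∫ x, (μ x - g x) ^ 2 * ρ x ∂P := by simp_rw [mul_comm]
      _ = ∫ x, (μ x - g x) ^ 2 * (P[ρ|m]) x ∂P := h
      _ = ∫ x, ω x * (μ x - g x) ^ 2 ∂P := by
          refine integral_congr_ae ?_
          filter_upwards [hρ_ce] with x e
          rw [e, mul_comm]
  calc ∫ x, ρ x * (ξ x - g x) ^ 2 ∂P
      = ∫ x, (ρ x * (ξ x - μ x) ^ 2 + 2 * (ω x * (μ x - g x)) * (γ x - μ x)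
          + ρ x * (μ x - g x) ^ 2) ∂P := integral_congr_ae key
    _ = ∫ x, ρ x * (ξ x - μ x) ^ 2 ∂P + ∫ x, 2 * (ω x * (μ x - g x)) * (γ x - μ x) ∂P
          + ∫ x, ρ x * (μ x - g x) ^ 2 ∂P := by
        have h12 := integral_add hf1_int hcross_int
        have h := integral_add (hf1_int.add hcross_int) hf3_int
        simp only [Pi.add_apply] at h h12
        rw [h, h12]
    _ = ∫ x, ρ x * (ξ x - μ x) ^ 2 ∂P + ∫ x, ω x * (μ x - g x) ^ 2 ∂P := by
        rw [hcross_zero, hthird]; ring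
end

section
/- For all bounded m-measurable δ, g, ĝ : Ω → ℝ, the map r ↦ ∫ (ρ·(μ − g) + (ω + r·δ)·(γ − μ))·(ĝ − g) dP is constant in r; equivalently, its derivative at r = 0, which equals ∫ δ·(γ − μ)·(ĝ − g) dP, vanishes. (This is the vanishing of the cross-derivative of the weighted population risk in the direction of a perturbation of the weight-function nuisance ω, the key step establishing Neyman-orthogonality with respect to the weight functions in Theorem 2.) -/
open MeasureTheory

private lemma integrable_of_bdd {Ω : Type*} {F : MeasurableSpace Ω} {P : Measure Ω}
    [IsProbabilityMeasure P] {f : Ω → ℝ} (hf : Measurable f) {C : ℝ}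
    (hC : ∀ x, |f x| ≤ C) : Integrable f P :=
  ⟨hf.aestronglyMeasurable, HasFiniteIntegral.of_bounded (C := C)
    (Filter.Eventually.of_forall hC)⟩

/-- **Neyman-orthogonality with respect to the weight functions** (key step of Theorem 2).
Let `ρ, γ` be bounded random variables, `μ, ω` bounded `m`-measurable random variables with
`E[γ | m] = μ` P-a.s. Then for all bounded `m`-measurable `δ, g, ĝ`, the map
`r ↦ ∫ (ρ·(μ − g) + (ω + r·δ)·(γ − μ))·(ĝ − g) dP` is constant in `r`;
equivalently, its derivative at `r = 0`, which equals `∫ δ·(γ − μ)·(ĝ − g) dP`, vanishes. -/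
theorem orthogonality_weight_direction
    {Ω : Type*} {m : MeasurableSpace Ω} {F : MeasurableSpace Ω} {P : Measure Ω} [IsProbabilityMeasure P]
    (hm : m ≤ F)
    (ρ γ μ ω : Ω → ℝ)
    (hρ_meas : Measurable ρ) (hγ_meas : Measurable γ)
    (hμ_meas : Measurable[m] μ) (hω_meas : Measurable[m] ω)
    (Cρ Cγ Cμ Cω : ℝ)
    (hρ_bd : ∀ x, |ρ x| ≤ Cρ) (hγ_bd : ∀ x, |γ x| ≤ Cγ)
    (hμ_bd : ∀ x, |μ x| ≤ Cμ) (hω_bd : ∀ x, |ω x| ≤ Cω)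
    (hγ_ce : P[γ | m] =ᵐ[P] μ)
    (δ g ghat : Ω → ℝ)
    (hδ_meas : Measurable[m] δ) (hg_meas : Measurable[m] g) (hghat_meas : Measurable[m] ghat)
    (Cδ Cg Cghat : ℝ)
    (hδ_bd : ∀ x, |δ x| ≤ Cδ) (hg_bd : ∀ x, |g x| ≤ Cg) (hghat_bd : ∀ x, |ghat x| ≤ Cghat) :
    (∀ r s : ℝ,
        ∫ x, (ρ x * (μ x - g x) + (ω x + r * δ x) * (γ x - μ x)) * (ghat x - g x) ∂P
        = ∫ x, (ρ x * (μ x - g x) + (ω x + s * δ x) * (γ x - μ x)) * (ghat x - g x) ∂P) ∧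
      ∫ x, δ x * (γ x - μ x) * (ghat x - g x) ∂P = 0 := by
  have hμF : Measurable[F] μ := hμ_meas.mono hm le_rfl
  have hωF : Measurable[F] ω := hω_meas.mono hm le_rfl
  have hδF : Measurable[F] δ := hδ_meas.mono hm le_rfl
  have hgF : Measurable[F] g := hg_meas.mono hm le_rfl
  have hghatF : Measurable[F] ghat := hghat_meas.mono hm le_rfl
  have hρF : Measurable[F] ρ := hρ_meas
  have hγF : Measurable[F] γ := hγ_meas
  -- f := δ * (ghat - g), m-strongly-measurable and bounded
  set f : Ω → ℝ := fun x => δ x * (ghat x - g x) with hf_def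
  have hf_m : StronglyMeasurable[m] f :=
    (hδ_meas.mul (hghat_meas.sub hg_meas)).stronglyMeasurable
  have hfF : Measurable[F] f := hδF.mul (hghatF.sub hgF)
  have hf_bd : ∀ x, |f x| ≤ Cδ * (Cghat + Cg) := by
    intro x
    calc |f x| = |δ x| * |ghat x - g x| := abs_mul _ _
    _ ≤ Cδ * (Cghat + Cg) := by
        apply mul_le_mul (hδ_bd x) ((abs_sub _ _).trans (add_le_add (hghat_bd x) (hg_bd x)))
          (abs_nonneg _) ((abs_nonneg (δ x)).trans (hδ_bd x))
  -- integrability facts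
  have hγ_int : Integrable γ P := integrable_of_bdd hγF hγ_bd
  have hfγ_int : Integrable (fun x => f x * γ x) P := by
    refine integrable_of_bdd (hfF.mul hγF) (C := Cδ * (Cghat + Cg) * Cγ) ?_
    intro x
    rw [abs_mul]
    exact mul_le_mul (hf_bd x) (hγ_bd x) (abs_nonneg _)
      ((abs_nonneg (f x)).trans (hf_bd x))
  have hfμ_int : Integrable (fun x => f x * μ x) P := by
    refine integrable_of_bdd (hfF.mul hμF) (C := Cδ * (Cghat + Cg) * Cμ) ?_
    intro x
    rw [abs_mul]
    exact mul_le_mul (hf_bd x) (hμ_bd x) (abs_nonneg _)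
      ((abs_nonneg (f x)).trans (hf_bd x))
  -- key: ∫ f*γ = ∫ f*μ
  have hkey : ∫ x, f x * γ x ∂P = ∫ x, f x * μ x ∂P := by
    have h1 : P[fun x => f x * γ x | m] =ᵐ[P] fun x => f x * (P[γ|m]) x :=
      condExp_mul_of_stronglyMeasurable_left hf_m hfγ_int hγ_int
    have h2 : (fun x => f x * (P[γ|m]) x) =ᵐ[P] fun x => f x * μ x :=
      hγ_ce.mono fun x hx => by simp only [hx]
    calc ∫ x, f x * γ x ∂P = ∫ x, (P[fun x => f x * γ x | m]) x ∂P :=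
          (integral_condExp hm).symm
    _ = ∫ x, f x * μ x ∂P := integral_congr_ae (h1.trans h2)
  -- second goal
  have hB_eq : ∀ x, δ x * (γ x - μ x) * (ghat x - g x) = f x * γ x - f x * μ x := by
    intro x; simp only [hf_def]; ring
  have hB_int : Integrable (fun x => δ x * (γ x - μ x) * (ghat x - g x)) P := by
    have : (fun x => δ x * (γ x - μ x) * (ghat x - g x))
        = fun x => f x * γ x - f x * μ x := funext hB_eq
    rw [this]; exact hfγ_int.sub hfμ_int
  have hsecond : ∫ x, δ x * (γ x - μ x) * (ghat x - g x) ∂P = 0 := by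
    simp only [hB_eq]
    rw [integral_sub hfγ_int hfμ_int, hkey, sub_self]
  refine ⟨fun r s => ?_, hsecond⟩
  -- first goal via linearity
  have hA_int : Integrable
      (fun x => (ρ x * (μ x - g x) + ω x * (γ x - μ x)) * (ghat x - g x)) P := by
    refine integrable_of_bdd
      (((hρF.mul (hμF.sub hgF)).add (hωF.mul (hγF.sub hμF))).mul (hghatF.sub hgF))
      (C := (Cρ * (Cμ + Cg) + Cω * (Cγ + Cμ)) * (Cghat + Cg)) ?_
    intro x
    have h1 : |ρ x * (μ x - g x) + ω x * (γ x - μ x)| ≤ Cρ * (Cμ + Cg) + Cω * (Cγ + Cμ) := by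
      refine (abs_add_le _ _).trans (add_le_add ?_ ?_)
      · rw [abs_mul]
        exact mul_le_mul (hρ_bd x) ((abs_sub _ _).trans (add_le_add (hμ_bd x) (hg_bd x)))
          (abs_nonneg _) ((abs_nonneg (ρ x)).trans (hρ_bd x))
      · rw [abs_mul]
        exact mul_le_mul (hω_bd x) ((abs_sub _ _).trans (add_le_add (hγ_bd x) (hμ_bd x)))
          (abs_nonneg _) ((abs_nonneg (ω x)).trans (hω_bd x))
    rw [abs_mul]
    exact mul_le_mul h1 ((abs_sub _ _).trans (add_le_add (hghat_bd x) (hg_bd x)))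
      (abs_nonneg _) ((abs_nonneg _).trans h1)
  have hsplit : ∀ t : ℝ,
      ∫ x, (ρ x * (μ x - g x) + (ω x + t * δ x) * (γ x - μ x)) * (ghat x - g x) ∂P
      = ∫ x, (ρ x * (μ x - g x) + ω x * (γ x - μ x)) * (ghat x - g x) ∂P := by
    intro t
    have heq : ∀ x, (ρ x * (μ x - g x) + (ω x + t * δ x) * (γ x - μ x)) * (ghat x - g x)
        = (ρ x * (μ x - g x) + ω x * (γ x - μ x)) * (ghat x - g x)
          + t * (δ x * (γ x - μ x) * (ghat x - g x)) := by
      intro x; ring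
    simp only [heq]
    rw [integral_add hA_int (hB_int.const_mul t), integral_const_mul, hsecond,
      mul_zero, add_zero]
  rw [hsplit r, hsplit s]
end

section
/- Let γ := (∏_{j=0}^{n} 1_{A_j}/π_j)·Y + Σ_{j=0}^{n} μ_j·(1 − 1_{A_j}/π_j)·∏_{k=0}^{j−1} 1_{A_k}/π_k be the doubly-robust (DR) pseudo-outcome. Then E[γ | 𝒢_0] = μ_0 P-almost surely; i.e., the conditional expectation of the DR pseudo-outcome given the initial history equals the conditional average potential outcome (Lemma on the conditional expectation of the DR pseudo-outcome, CAPO case). -/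
/-!
Abel summation rewrites the pseudo-outcome as
`γ = μ₀ + ∑_{j ≤ n} w_j (1_{A_j} / π_j) (μ_{j+1} - μ_j)`, where `w_j = ∏_{k<j} 1_{A_k} / π_k`
and `μ_{n+1} := Y`. Since `w_j / π_j` is `𝒢_j`-measurable and
`E[1_{A_j} (μ_{j+1} - μ_j) | 𝒢_j] = π_j μ_j - π_j μ_j = 0`, every increment has zero conditional
mean given `𝒢_j`, hence given `𝒢_0` by the tower property. The bound `π_j ≥ ε` keeps all the
weights bounded, which makes every term integrable.
-/

open MeasureTheory Finset

open scoped ENNReal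

theorem prod_mul_add_sum_mul_one_sub_mul_prod {R : Type*} [CommRing R] (r ν : ℕ → R) (N : ℕ) :
    (∏ j ∈ range N, r j) * ν N + ∑ j ∈ range N, ν j * (1 - r j) * ∏ k ∈ range j, r k
      = ν 0 + ∑ j ∈ range N, (∏ k ∈ range j, r k) * r j * (ν (j + 1) - ν j) := by
  induction N with
  | zero => simp
  | succ N ih =>
    rw [sum_range_succ, sum_range_succ, prod_range_succ]
    linear_combination ih

theorem prod_mul_add_sum_mul_one_sub_mul_prod_ite {R : Type*} [CommRing R] (r m : ℕ → R) (y : R)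
    (n : ℕ) :
    (∏ j ∈ range (n + 1), r j) * y + ∑ j ∈ range (n + 1), m j * (1 - r j) * ∏ k ∈ range j, r k
      = m 0 + ∑ j ∈ range (n + 1),
          (∏ k ∈ range j, r k) * r j * ((if j < n then m (j + 1) else y) - m j) := by
  have h := prod_mul_add_sum_mul_one_sub_mul_prod r (fun j => if j ≤ n then m j else y) (n + 1)
  simp only [Nat.not_succ_le_self, if_false, n.zero_le, if_true, Nat.add_one_le_iff] at h
  convert h using 2 <;> refine sum_congr rfl fun j hj => ?_ <;>
    simp [Nat.lt_succ_iff.1 (mem_range.1 hj)]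

section

variable {Ω : Type*} {m m₀ : MeasurableSpace Ω} {μ : Measure Ω}

theorem memLp_top_inv_of_le {g : Ω → ℝ} {ε : ℝ} (hg : AEMeasurable g μ) (hε : 0 < ε)
    (hle : ∀ᵐ x ∂μ, ε ≤ g x) : MemLp (fun x => (g x)⁻¹) ∞ μ := by
  refine memLp_top_of_bound hg.inv.aestronglyMeasurable ε⁻¹ ?_
  filter_upwards [hle] with x hx
  rw [norm_inv, Real.norm_of_nonneg (hε.le.trans hx)]
  exact inv_anti₀ hε hx

noncomputable def inversePropensityWeight (A : ℕ → Set Ω) (π : ℕ → Ω → ℝ) (j : ℕ) (x : Ω) : ℝ :=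
  ∏ k ∈ range j, (A k).indicator (fun _ => 1) x / π k x

theorem measurable_inversePropensityWeight {G : ℕ → MeasurableSpace Ω} (hG : Monotone G)
    {A : ℕ → Set Ω} {π : ℕ → Ω → ℝ} {j : ℕ} (hA : ∀ k < j, MeasurableSet[G (k + 1)] (A k))
    (hπ : ∀ k < j, Measurable[G k] (π k)) : Measurable[G j] (inversePropensityWeight A π j) :=
  Finset.measurable_prod _ fun k hk =>
    have hkj : k + 1 ≤ j := mem_range.1 hk
    ((measurable_const.indicator (hA k hkj)).div ((hπ k hkj).mono (hG k.le_succ) le_rfl)).mono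
      (hG hkj) le_rfl

theorem memLp_top_inversePropensityWeight {A : ℕ → Set Ω} {π : ℕ → Ω → ℝ} {ε : ℝ} {j : ℕ}
    (hA : ∀ k < j, MeasurableSet (A k)) (hπ : ∀ k < j, AEMeasurable (π k) μ) (hε : 0 < ε)
    (hπ_bd : ∀ k < j, ∀ᵐ x ∂μ, ε ≤ π k x) : MemLp (inversePropensityWeight A π j) ∞ μ := by
  have h := MemLp.prod' (μ := μ) (s := range j)
    (f := fun k x => (A k).indicator (fun _ => 1) x / π k x) (p := fun _ => ∞) fun k hk => by
      rw [mem_range] at hk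
      simpa only [div_eq_mul_inv] using (memLp_top_inv_of_le (hπ k hk) hε (hπ_bd k hk)).mul'
        ((memLp_top_const 1).indicator (hA k hk))
  simp only [ENNReal.inv_top, sum_const_zero, ENNReal.inv_zero] at h
  exact h

theorem condExp_mul_sub_eq_zero {I V M : Ω → ℝ} (hM : StronglyMeasurable[m] M)
    (hI : Integrable I μ) (hIV : Integrable (I * V) μ) (hMI : Integrable (M * I) μ)
    (hIV_eq : μ[I * V | m] =ᵐ[μ] μ[I | m] * M) : μ[I * (V - M) | m] =ᵐ[μ] 0 := by
  have hpull : μ[M * I | m] =ᵐ[μ] M * μ[I | m] :=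
    condExp_mul_of_stronglyMeasurable_left hM hMI hI
  rw [mul_sub, mul_comm I M]
  filter_upwards [condExp_sub hIV hMI m, hIV_eq, hpull] with x hx hIVx hMIx
  simp only [hx, Pi.sub_apply, hIVx, hMIx, Pi.mul_apply, Pi.zero_apply]
  ring

theorem condExp_mul_eq_zero_of_condExp_eq_zero {m₁ m₂ : MeasurableSpace Ω} (h₁₂ : m₁ ≤ m₂)
    (h₂ : m₂ ≤ m₀) [SigmaFinite (μ.trim h₂)] {W g : Ω → ℝ} (hW : StronglyMeasurable[m₂] W)
    (hWg : Integrable (W * g) μ) (hg : Integrable g μ) (hg_eq : μ[g | m₂] =ᵐ[μ] 0) :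
    μ[W * g | m₁] =ᵐ[μ] 0 := by
  have hWg_eq : μ[W * g | m₂] =ᵐ[μ] 0 := by
    filter_upwards [condExp_mul_of_stronglyMeasurable_left hW hWg hg, hg_eq] with x hx hgx
    simp [hx, hgx]
  calc μ[W * g | m₁] =ᵐ[μ] μ[μ[W * g | m₂] | m₁] := (condExp_condExp_of_le h₁₂ h₂).symm
    _ =ᵐ[μ] μ[0 | m₁] := condExp_congr_ae hWg_eq
    _ = 0 := condExp_zero

theorem condExp_weighted_increment_eq_zero {m₁ m₂ : MeasurableSpace Ω} [IsFiniteMeasure μ]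
    (h₁₂ : m₁ ≤ m₂) (h₂ : m₂ ≤ m₀) {s : Set Ω} (hs : MeasurableSet[m₀] s) {W p M V : Ω → ℝ}
    {ε : ℝ} (hW : StronglyMeasurable[m₂] W) (hWL : MemLp W ∞ μ) (hp : StronglyMeasurable[m₂] p)
    (hε : 0 < ε) (hp_bd : ∀ᵐ x ∂μ, ε ≤ p x) (hp_eq : p =ᵐ[μ] μ[s.indicator (fun _ => 1) | m₂])
    (hM : StronglyMeasurable[m₂] M) (hML : MemLp M ∞ μ) (hVL : MemLp V ∞ μ)
    (hV : μ[fun x => s.indicator (fun _ => 1) x * V x | m₂] =ᵐ[μ] fun x => p x * M x) :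
    Integrable (fun x => W x * (s.indicator (fun _ => 1) x / p x) * (V x - M x)) μ ∧
      μ[fun x => W x * (s.indicator (fun _ => 1) x / p x) * (V x - M x) | m₁] =ᵐ[μ] 0 := by
  set I : Ω → ℝ := s.indicator fun _ => 1
  have hIL : MemLp I ∞ μ := (memLp_top_const 1).indicator hs
  have hWpL : MemLp (W * fun x => (p x)⁻¹) ∞ μ :=
    (memLp_top_inv_of_le (hp.mono h₂).measurable.aemeasurable hε hp_bd).mul (r := ∞) hWL
  have hgL : MemLp (I * (V - M)) ∞ μ := (hVL.sub hML).mul (r := ∞) hIL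
  have hterm : (fun x => W x * (I x / p x) * (V x - M x))
      = (W * fun x => (p x)⁻¹) * (I * (V - M)) := by
    funext x
    simp only [Pi.mul_apply, Pi.sub_apply]
    ring
  rw [hterm]
  refine ⟨(hgL.mul (r := ∞) hWpL).integrable le_top, ?_⟩
  refine condExp_mul_eq_zero_of_condExp_eq_zero h₁₂ h₂ (hW.mul hp.measurable.inv.stronglyMeasurable)
    ((hgL.mul (r := ∞) hWpL).integrable le_top) (hgL.integrable le_top) ?_
  refine condExp_mul_sub_eq_zero hM (hIL.integrable le_top)
    ((hVL.mul (r := ∞) hIL).integrable le_top) ((hIL.mul (r := ∞) hML).integrable le_top) ?_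
  filter_upwards [hV, hp_eq] with x hx hpx
  rw [Pi.mul_apply, ← hpx]
  exact hx

theorem condExp_add_sum_eq_of_condExp_eq_zero {ι : Type*} {s : Finset ι} (hm : m ≤ m₀)
    [SigmaFinite (μ.trim hm)] {f₀ : Ω → ℝ} {g : ι → Ω → ℝ} (hf₀ : StronglyMeasurable[m] f₀)
    (hf₀i : Integrable f₀ μ) (hg : ∀ i ∈ s, Integrable (g i) μ)
    (hg_eq : ∀ i ∈ s, μ[g i | m] =ᵐ[μ] 0) :
    μ[fun x => f₀ x + ∑ i ∈ s, g i x | m] =ᵐ[μ] f₀ := by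
  have hsum : μ[∑ i ∈ s, g i | m] =ᵐ[μ] 0 := by
    refine (condExp_finsetSum hg m).trans ?_
    filter_upwards [(Filter.eventually_all_finset s).2 hg_eq] with x hx
    simp only [Finset.sum_apply, Finset.sum_eq_zero hx, Pi.zero_apply]
  have hfun : (fun x => f₀ x + ∑ i ∈ s, g i x) = f₀ + ∑ i ∈ s, g i := by
    funext x
    simp only [Pi.add_apply, Finset.sum_apply]
  rw [hfun]
  filter_upwards [condExp_add hf₀i (integrable_finsetSum' s hg) m, hsum] with x hx hsx
  rw [hx, Pi.add_apply, hsx, condExp_of_stronglyMeasurable hm hf₀ hf₀i, Pi.zero_apply, add_zero]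

end

/-- **Lemma (conditional expectation of the DR pseudo-outcome, CAPO case).**
With a filtration `𝒢`, treatment events `A_j ∈ 𝒢_{j+1}`, `𝒢_j`-measurable propensities
`π_j = E[1_{A_j} | 𝒢_j]` with `ε ≤ π_j ≤ 1` a.s., a bounded outcome `Y`, and bounded
`𝒢_j`-measurable response functions `μ_j` characterized recursively by
`E[1_{A_n}·Y | 𝒢_n] = π_n·μ_n` and `E[1_{A_j}·μ_{j+1} | 𝒢_j] = π_j·μ_j`,
the DR pseudo-outcome
`γ := (∏_{j=0}^{n} 1_{A_j}/π_j)·Y + Σ_{j=0}^{n} μ_j·(1 − 1_{A_j}/π_j)·∏_{k<j} 1_{A_k}/π_k`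
satisfies `E[γ | 𝒢_0] = μ_0` P-almost surely. -/
theorem DR_pseudo_outcome_condexp_CAPO
    {Ω : Type*} {F : MeasurableSpace Ω} {P : Measure Ω} [IsProbabilityMeasure P]
    (n : ℕ) (G : ℕ → MeasurableSpace Ω) (hG_mono : Monotone G) (hG_le : ∀ j, G j ≤ F)
    (A : ℕ → Set Ω) (hA : ∀ j ≤ n, MeasurableSet[G (j + 1)] (A j))
    (π : ℕ → Ω → ℝ) (hπ_meas : ∀ j ≤ n, Measurable[G j] (π j))
    (ε : ℝ) (hε : 0 < ε) (hπ_bd : ∀ j ≤ n, ∀ᵐ x ∂P, ε ≤ π j x ∧ π j x ≤ 1)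
    (hπ_ce : ∀ j ≤ n, π j =ᵐ[P] P[(A j).indicator (fun _ => (1 : ℝ)) | G j])
    (Y : Ω → ℝ) (hY_meas : Measurable Y) (CY : ℝ) (hY_bd : ∀ x, |Y x| ≤ CY)
    (μ : ℕ → Ω → ℝ) (hμ_meas : ∀ j ≤ n, Measurable[G j] (μ j))
    (Cμ : ℝ) (hμ_bd : ∀ j ≤ n, ∀ x, |μ j x| ≤ Cμ)
    (hμ_n : P[fun x => (A n).indicator (fun _ => (1 : ℝ)) x * Y x | G n]
        =ᵐ[P] fun x => π n x * μ n x)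
    (hμ_rec : ∀ j < n,
        P[fun x => (A j).indicator (fun _ => (1 : ℝ)) x * μ (j + 1) x | G j]
          =ᵐ[P] fun x => π j x * μ j x)
    (γ : Ω → ℝ)
    (hγ : γ = fun x =>
      (∏ j ∈ range (n + 1), (A j).indicator (fun _ => (1 : ℝ)) x / π j x) * Y x
      + ∑ j ∈ range (n + 1),
          μ j x * (1 - (A j).indicator (fun _ => (1 : ℝ)) x / π j x)
            * ∏ k ∈ range j, (A k).indicator (fun _ => (1 : ℝ)) x / π k x) :
    P[γ | G 0] =ᵐ[P] μ 0 := by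
  let V : ℕ → Ω → ℝ := fun j x => if j < n then μ (j + 1) x else Y x
  have hπ_lb : ∀ j ≤ n, ∀ᵐ x ∂P, ε ≤ π j x := fun j hj => (hπ_bd j hj).mono fun _ hx => hx.1
  have hμL : ∀ j ≤ n, MemLp (μ j) ∞ P := fun j hj =>
    memLp_top_of_bound ((hμ_meas j hj).mono (hG_le j) le_rfl).aestronglyMeasurable Cμ
      (ae_of_all _ (hμ_bd j hj))
  have hVL : ∀ j ≤ n, MemLp (V j) ∞ P := fun j _ => by
    by_cases hjn : j < n <;> simp only [V, hjn, if_true, if_false]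
    exacts [hμL (j + 1) hjn,
      memLp_top_of_bound hY_meas.aestronglyMeasurable CY (ae_of_all _ hY_bd)]
  have hV : ∀ j ≤ n, P[fun x => (A j).indicator (fun _ => 1) x * V j x | G j]
      =ᵐ[P] fun x => π j x * μ j x := by
    intro j hj
    rcases hj.lt_or_eq with hjn | rfl
    · simpa only [V, hjn, if_true] using hμ_rec j hjn
    · simpa only [V, lt_irrefl, if_false] using hμ_n
  have hincrement := fun j (hj : j ≤ n) => condExp_weighted_increment_eq_zero
    (hG_mono j.zero_le) (hG_le j) (hG_le _ _ (hA j hj))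
    (measurable_inversePropensityWeight hG_mono (fun k hk => hA k (by omega))
      fun k hk => hπ_meas k (by omega)).stronglyMeasurable
    (memLp_top_inversePropensityWeight (fun k hk => hG_le _ _ (hA k (by omega)))
      (fun k hk => ((hπ_meas k (by omega)).mono (hG_le k) le_rfl).aemeasurable) hε
      fun k hk => hπ_lb k (by omega))
    (hπ_meas j hj).stronglyMeasurable hε (hπ_lb j hj) (hπ_ce j hj)
    (hμ_meas j hj).stronglyMeasurable (hμL j hj) (hVL j hj) (hV j hj)
  have hγ_eq : γ = fun x => μ 0 x + ∑ j ∈ range (n + 1), inversePropensityWeight A π j x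
      * ((A j).indicator (fun _ => 1) x / π j x) * (V j x - μ j x) := by
    rw [hγ]
    funext x
    exact prod_mul_add_sum_mul_one_sub_mul_prod_ite _ _ _ _
  rw [hγ_eq]
  exact condExp_add_sum_eq_of_condExp_eq_zero (hG_le 0) (hμ_meas 0 n.zero_le).stronglyMeasurable
    ((hμL 0 n.zero_le).integrable le_top)
    (fun j hj => (hincrement j (Nat.lt_succ_iff.1 (mem_range.1 hj))).1)
    fun j hj => (hincrement j (Nat.lt_succ_iff.1 (mem_range.1 hj))).2
end

section
/- Define the weight functions w_j := E[∏_{k=j+1}^{n} π_k | 𝒢_j] for j < n and w_n := 1, and define ρ := ∏_{j=0}^{n} π_j + Σ_{j=0}^{n} (1_{A_j} − π_j)·w_j·∏_{k=0}^{j−1} π_k. Then E[ρ | 𝒢_0] = E[∏_{j=0}^{n} π_j | 𝒢_0] P-almost surely; i.e., the conditional expectation of ρ given the initial history equals the propensity weight ω_0 (Lemma on the conditional expectation of ρ, CAPO case). -/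
open MeasureTheory Finset

/-!
Each summand of `ρ - ∏ π` is an increment `1_{A_j} - π_j = 1_{A_j} - E[1_{A_j} | 𝒢_j]` multiplied
by the bounded `𝒢_j`-measurable weight `w_j ∏_{k<j} π_k`. Pulling the weight out of `E[· | 𝒢_j]`
shows that each summand has zero conditional expectation given `𝒢_j`, hence, by the tower
property, given `𝒢_0`.
-/

namespace MeasureTheory

variable {Ω : Type*} {m m' m0 : MeasurableSpace Ω} {μ : Measure Ω}

lemma ae_abs_prod_le_one {ι : Type*} {s : Finset ι} {f : ι → Ω → ℝ}
    (hf : ∀ i ∈ s, ∀ᵐ x ∂μ, |f i x| ≤ 1) : ∀ᵐ x ∂μ, |∏ i ∈ s, f i x| ≤ 1 := by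
  filter_upwards [(Filter.eventually_all_finset s).2 hf] with x hx
  rw [abs_prod]
  exact prod_le_one (fun i _ => abs_nonneg _) hx

lemma ae_abs_le_one_of_ae_eq_condExp_indicator {s : Set Ω} {p : Ω → ℝ}
    (hp : p =ᵐ[μ] μ[s.indicator (fun _ => (1 : ℝ)) | m]) : ∀ᵐ x ∂μ, |p x| ≤ 1 := by
  have h_ind : ∀ᵐ x ∂μ, |s.indicator (fun _ => (1 : ℝ)) x| ≤ 1 :=
    .of_forall fun x => by by_cases hx : x ∈ s <;> simp [hx]
  filter_upwards [hp, ae_bdd_abs_condExp_of_ae_bdd_abs (m := m) h_ind] with x hx hx'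
  rwa [hx]

lemma aestronglyMeasurable_finset_prod {M ι : Type*} [CommMonoid M] [TopologicalSpace M]
    [ContinuousMul M] (s : Finset ι) {f : ι → Ω → M}
    (hf : ∀ i ∈ s, AEStronglyMeasurable[m] (f i) μ) :
    AEStronglyMeasurable[m] (fun x => ∏ i ∈ s, f i x) μ := by
  classical
  induction s using Finset.induction_on with
  | empty => simpa using aestronglyMeasurable_const
  | insert i s hi ih =>
    simp_rw [prod_insert hi]
    exact (hf i (mem_insert_self i s)).mul (ih fun k hk => hf k (mem_insert_of_mem hk))

lemma integrable_sub_mul_of_bdd {f p g : Ω → ℝ} {C : ℝ} (hf : Integrable f μ)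
    (hp : p =ᵐ[μ] μ[f | m]) (hg : AEStronglyMeasurable g μ) (hg_bd : ∀ᵐ x ∂μ, |g x| ≤ C) :
    Integrable (fun x => (f x - p x) * g x) μ :=
  (hf.sub (integrable_condExp.congr hp.symm)).mul_bdd hg hg_bd

lemma condExp_sub_mul_ae_eq_zero (hm : m ≤ m0) [SigmaFinite (μ.trim hm)] {f p g : Ω → ℝ}
    {C : ℝ} (hf : Integrable f μ) (hp : p =ᵐ[μ] μ[f | m]) (hg : AEStronglyMeasurable[m] g μ)
    (hg_bd : ∀ᵐ x ∂μ, |g x| ≤ C) :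
    μ[fun x => (f x - p x) * g x | m] =ᵐ[μ] 0 := by
  have hp_int : Integrable p μ := integrable_condExp.congr hp.symm
  have h_incr : μ[f - p | m] =ᵐ[μ] 0 := by
    have hcp : μ[p | m] =ᵐ[μ] μ[f | m] := by
      refine (condExp_congr_ae hp).trans ?_
      rw [condExp_of_stronglyMeasurable hm stronglyMeasurable_condExp integrable_condExp]
    filter_upwards [condExp_sub hf hp_int m, hcp] with x hx hx'
    simp [hx, hx']
  have h_comm : (fun x => (f x - p x) * g x) = g * (f - p) := by
    funext x
    simp only [Pi.mul_apply, Pi.sub_apply, mul_comm]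
  rw [h_comm]
  filter_upwards [condExp_mul_of_aestronglyMeasurable_left hg
    (h_comm ▸ integrable_sub_mul_of_bdd hf hp (hg.mono hm) hg_bd) (hf.sub hp_int), h_incr]
    with x hx h0
  simp [hx, h0]

lemma condExp_ae_eq_zero_of_le (hm : m ≤ m') (hm' : m' ≤ m0) [SigmaFinite (μ.trim hm')]
    {f : Ω → ℝ} (hf : μ[f | m'] =ᵐ[μ] 0) : μ[f | m] =ᵐ[μ] 0 :=
  (condExp_condExp_of_le hm hm').symm.trans ((condExp_congr_ae hf).trans (by rw [condExp_zero]))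

end MeasureTheory

section Weights

variable {Ω : Type*} {F : MeasurableSpace Ω} {P : Measure Ω} {n j : ℕ}
  {G : ℕ → MeasurableSpace Ω} {π w : ℕ → Ω → ℝ}

lemma aestronglyMeasurable_weight_mul_prod (hG_mono : Monotone G)
    (hπ : ∀ k ≤ n, AEStronglyMeasurable[G k] (π k) P)
    (hw : ∀ j < n, w j =ᵐ[P] P[fun x => ∏ k ∈ Icc (j + 1) n, π k x | G j])
    (hw_n : w n = fun _ => (1 : ℝ)) (hj : j ≤ n) :
    AEStronglyMeasurable[G j] (fun x => w j x * ∏ k ∈ range j, π k x) P := by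
  have hw_j : AEStronglyMeasurable[G j] (w j) P := by
    rcases hj.lt_or_eq with hj | rfl
    · exact stronglyMeasurable_condExp.aestronglyMeasurable.congr (hw j hj).symm
    · exact hw_n ▸ aestronglyMeasurable_const
  exact hw_j.mul (aestronglyMeasurable_finset_prod _ fun k hk =>
    (hπ k ((mem_range.1 hk).trans_le hj).le).mono (hG_mono (mem_range.1 hk).le))

lemma ae_abs_weight_mul_prod_le_one (hπ : ∀ k ≤ n, ∀ᵐ x ∂P, |π k x| ≤ 1)
    (hw : ∀ j < n, w j =ᵐ[P] P[fun x => ∏ k ∈ Icc (j + 1) n, π k x | G j])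
    (hw_n : w n = fun _ => (1 : ℝ)) (hj : j ≤ n) :
    ∀ᵐ x ∂P, |w j x * ∏ k ∈ range j, π k x| ≤ 1 := by
  have hw_j : ∀ᵐ x ∂P, |w j x| ≤ 1 := by
    rcases hj.lt_or_eq with hj | rfl
    · filter_upwards [hw j hj, ae_bdd_abs_condExp_of_ae_bdd_abs (m := G j)
        (ae_abs_prod_le_one fun k hk => hπ k (mem_Icc.1 hk).2)] with x hx hx'
      rwa [hx]
    · simp [hw_n]
  filter_upwards [hw_j, ae_abs_prod_le_one fun k (hk : k ∈ range j) =>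
    hπ k ((mem_range.1 hk).trans_le hj).le] with x h_w h_prod
  rw [abs_mul]
  exact mul_le_one₀ h_w (abs_nonneg _) h_prod

end Weights

theorem condexp_rho_CAPO_general
    {Ω : Type*} {F : MeasurableSpace Ω} {P : Measure Ω} [IsProbabilityMeasure P]
    (n : ℕ) (G : ℕ → MeasurableSpace Ω) (hG_mono : Monotone G) (hG_le : ∀ j, G j ≤ F)
    (A : ℕ → Set Ω) (hA : ∀ j ≤ n, MeasurableSet[G (j + 1)] (A j))
    (π : ℕ → Ω → ℝ)
    (hπ_ce : ∀ j ≤ n, π j =ᵐ[P] P[(A j).indicator (fun _ => (1 : ℝ)) | G j])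
    (w : ℕ → Ω → ℝ)
    (hw : ∀ j < n, w j =ᵐ[P] P[fun x => ∏ k ∈ Icc (j + 1) n, π k x | G j])
    (hw_n : w n = fun _ => (1 : ℝ))
    (ρ : Ω → ℝ)
    (hρ : ρ = fun x =>
      (∏ j ∈ range (n + 1), π j x)
      + ∑ j ∈ range (n + 1),
          ((A j).indicator (fun _ => (1 : ℝ)) x - π j x) * w j x
            * ∏ k ∈ range j, π k x) :
    P[ρ | G 0] =ᵐ[P] P[fun x => ∏ j ∈ range (n + 1), π j x | G 0] := by
  have hπ_bd : ∀ j ≤ n, ∀ᵐ x ∂P, |π j x| ≤ 1 := fun j hj =>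
    ae_abs_le_one_of_ae_eq_condExp_indicator (hπ_ce j hj)
  have hπ_aesm : ∀ j ≤ n, AEStronglyMeasurable[G j] (π j) P := fun j hj =>
    stronglyMeasurable_condExp.aestronglyMeasurable.congr (hπ_ce j hj).symm
  have hind_int : ∀ j ≤ n, Integrable ((A j).indicator (fun _ => (1 : ℝ))) P := fun j hj =>
    (integrable_const 1).indicator (hG_le (j + 1) _ (hA j hj))
  set term : ℕ → Ω → ℝ := fun j x =>
    ((A j).indicator (fun _ => (1 : ℝ)) x - π j x) * (w j x * ∏ k ∈ range j, π k x)
  have hweight_aesm := fun j (hj : j ≤ n) =>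
    aestronglyMeasurable_weight_mul_prod hG_mono hπ_aesm hw hw_n hj
  have hweight_bd := fun j (hj : j ≤ n) => ae_abs_weight_mul_prod_le_one hπ_bd hw hw_n hj
  have hterm_int : ∀ j ∈ range (n + 1), Integrable (term j) P := fun j hj => by
    rw [mem_range_succ_iff] at hj
    exact integrable_sub_mul_of_bdd (hind_int j hj) (hπ_ce j hj)
      ((hweight_aesm j hj).mono (hG_le j)) (hweight_bd j hj)
  have hterm_ce : ∀ j ∈ range (n + 1), P[term j | G 0] =ᵐ[P] 0 := fun j hj => by
    rw [mem_range_succ_iff] at hj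
    exact condExp_ae_eq_zero_of_le (hG_mono j.zero_le) (hG_le j)
      (condExp_sub_mul_ae_eq_zero (hG_le j) (hind_int j hj) (hπ_ce j hj)
        (hweight_aesm j hj) (hweight_bd j hj))
  have hprod_int : Integrable (fun x => ∏ j ∈ range (n + 1), π j x) P :=
    .of_bound (aestronglyMeasurable_finset_prod _ fun k hk =>
      (hπ_aesm k (mem_range_succ_iff.1 hk)).mono (hG_le k)) 1
      (ae_abs_prod_le_one fun k hk => hπ_bd k (mem_range_succ_iff.1 hk))
  have hρ_split : ρ = (fun x => ∏ j ∈ range (n + 1), π j x) + ∑ j ∈ range (n + 1), term j := by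
    funext x
    simp [hρ, term, Finset.sum_apply, mul_assoc]
  filter_upwards [hρ_split ▸ condExp_add hprod_int (integrable_finsetSum' _ hterm_int) (G 0),
    condExp_finsetSum hterm_int (G 0), (Filter.eventually_all_finset _).2 hterm_ce]
    with x h_add h_sum h_zero
  simp [h_add, h_sum, Finset.sum_apply, sum_eq_zero h_zero]

/-- **Lemma (conditional expectation of ρ, CAPO case).**
With a filtration `𝒢`, treatment events `A_j ∈ 𝒢_{j+1}`, and `𝒢_j`-measurable propensities
`π_j = E[1_{A_j} | 𝒢_j]` with `ε ≤ π_j ≤ 1` a.s., define the weight functions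
`w_j := E[∏_{k=j+1}^{n} π_k | 𝒢_j]` for `j < n` and `w_n := 1`, and define
`ρ := ∏_{j=0}^{n} π_j + Σ_{j=0}^{n} (1_{A_j} − π_j)·w_j·∏_{k<j} π_k`.
Then `E[ρ | 𝒢_0] = E[∏_{j=0}^{n} π_j | 𝒢_0]` P-almost surely, i.e. the conditional
expectation of `ρ` given the initial history equals the propensity weight `ω_0`. -/
theorem condexp_rho_CAPO
    {Ω : Type*} {F : MeasurableSpace Ω} {P : Measure Ω} [IsProbabilityMeasure P]
    (n : ℕ) (G : ℕ → MeasurableSpace Ω) (hG_mono : Monotone G) (hG_le : ∀ j, G j ≤ F)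
    (A : ℕ → Set Ω) (hA : ∀ j ≤ n, MeasurableSet[G (j + 1)] (A j))
    (π : ℕ → Ω → ℝ) (hπ_meas : ∀ j ≤ n, Measurable[G j] (π j))
    (ε : ℝ) (hε : 0 < ε) (hπ_bd : ∀ j ≤ n, ∀ᵐ x ∂P, ε ≤ π j x ∧ π j x ≤ 1)
    (hπ_ce : ∀ j ≤ n, π j =ᵐ[P] P[(A j).indicator (fun _ => (1 : ℝ)) | G j])
    (w : ℕ → Ω → ℝ)
    (hw : ∀ j < n, w j =ᵐ[P] P[fun x => ∏ k ∈ Icc (j + 1) n, π k x | G j])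
    (hw_n : w n = fun _ => (1 : ℝ))
    (ρ : Ω → ℝ)
    (hρ : ρ = fun x =>
      (∏ j ∈ range (n + 1), π j x)
      + ∑ j ∈ range (n + 1),
          ((A j).indicator (fun _ => (1 : ℝ)) x - π j x) * w j x
            * ∏ k ∈ range j, π k x) :
    P[ρ | G 0] =ᵐ[P] P[fun x => ∏ j ∈ range (n + 1), π j x | G 0] :=
  condexp_rho_CAPO_general n G hG_mono hG_le A hA π hπ_ce w hw hw_n ρ hρ
end

section
/- Let γ^a and γ^b be the DR pseudo-outcomes of the two systems, i.e., γ^c := (∏_{j=0}^{n} 1_{A^c_j}/π^c_j)·Y + Σ_{j=0}^{n} μ^c_j·(1 − 1_{A^c_j}/π^c_j)·∏_{k=0}^{j−1} 1_{A^c_k}/π^c_k for c ∈ {a, b}. Then E[γ^a − γ^b | 𝒢_0] = μ^a_0 − μ^b_0 P-almost surely; i.e., the conditional expectation of the DR pseudo-outcome for CATE given the initial history equals the conditional average treatment effect (Lemma on the conditional expectation of the DR pseudo-outcome, CATE case). -/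
/-!
Write `γ = T 0`, where `T m` is the pseudo-outcome of the problem restarted at time `m`. With
`D m = 1_{A_m} / π_m` it satisfies `T m = D m · T (m + 1) + μ_m (1 - D m)` and `T (n + 1) = Y`,
and backward induction gives `E[T m | 𝒢_m] = μ_m`. The augmentation term `μ_m (1 - D m)` has
conditional mean zero because `E[1_{A_m} | 𝒢_m] = π_m`. For the weighted term, the tower
property and the induction hypothesis give `E[1_{A_m} T (m + 1) | 𝒢_m] = E[1_{A_m} μ_{m+1} | 𝒢_m]
= π_m μ_m`, and dividing by the `𝒢_m`-measurable `π_m ≥ ε` yields `E[D m · T (m + 1) | 𝒢_m] = μ_m`.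
Everything is bounded, hence integrable, and the CATE identity is the difference of the two arms.
-/

open MeasureTheory Finset
open scoped ENNReal

section PseudoOutcome

variable {Ω : Type*} {m mΩ : MeasurableSpace Ω} {P : Measure Ω}

lemma memLp_top_of_abs_le {f : Ω → ℝ} {C : ℝ} (hf : AEStronglyMeasurable f P)
    (hC : ∀ x, |f x| ≤ C) : MemLp f ∞ P :=
  memLp_top_of_bound hf C (ae_of_all _ hC)

lemma memLp_top_indicator_div {s : Set Ω} {π : Ω → ℝ} {ε : ℝ} (hs : MeasurableSet s)
    (hπ : AEStronglyMeasurable π P) (hε : 0 < ε) (hπε : ∀ᵐ x ∂P, ε ≤ π x) :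
    MemLp (s.indicator 1 / π) ∞ P := by
  refine memLp_top_of_bound ((aestronglyMeasurable_const.indicator hs).div₀ hπ) ε⁻¹ ?_
  filter_upwards [hπε] with x hx
  by_cases hxs : x ∈ s
  · simp [hxs, abs_of_pos (hε.trans_le hx), inv_anti₀ hε hx]
  · simp [hxs, hε.le]

/-- Pseudo-outcome of the problem restarted at time `m`, with inverse propensity weights `D j`;
the paper's `γ` is the case `D j = 1_{A_j} / π_j`, `N = n + 1`, `m = 0`. -/
def drPseudoOutcomeFrom (D μ : ℕ → Ω → ℝ) (Y : Ω → ℝ) (N m : ℕ) : Ω → ℝ := fun x =>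
  (∏ j ∈ Ico m N, D j x) * Y x + ∑ j ∈ Ico m N, μ j x * (1 - D j x) * ∏ k ∈ Ico m j, D k x

section drPseudoOutcomeFrom

variable {D μ : ℕ → Ω → ℝ} {Y : Ω → ℝ} {N : ℕ}

lemma drPseudoOutcomeFrom_zero :
    drPseudoOutcomeFrom D μ Y N 0 = fun x =>
      (∏ j ∈ range N, D j x) * Y x + ∑ j ∈ range N, μ j x * (1 - D j x) * ∏ k ∈ range j, D k x := by
  simp only [range_eq_Ico]
  rfl

lemma drPseudoOutcomeFrom_self : drPseudoOutcomeFrom D μ Y N N = Y := by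
  ext x
  simp [drPseudoOutcomeFrom]

lemma drPseudoOutcomeFrom_of_lt {m : ℕ} (h : m < N) :
    drPseudoOutcomeFrom D μ Y N m
      = D m * drPseudoOutcomeFrom D μ Y N (m + 1) + μ m * (1 - D m) := by
  ext x
  have hshift : ∀ j ∈ Ico (m + 1) N, μ j x * (1 - D j x) * ∏ k ∈ Ico m j, D k x
      = D m x * (μ j x * (1 - D j x) * ∏ k ∈ Ico (m + 1) j, D k x) := fun j hj => by
    rw [prod_eq_prod_Ico_succ_bot (mem_Ico.1 hj).1]
    ring
  simp only [drPseudoOutcomeFrom, Pi.add_apply, Pi.mul_apply, Pi.sub_apply, Pi.one_apply,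
    prod_eq_prod_Ico_succ_bot h, sum_eq_sum_Ico_succ_bot h, Ico_self, prod_empty,
    sum_congr rfl hshift, ← mul_sum]
  ring

lemma memLp_top_drPseudoOutcomeFrom (hD : ∀ j < N, MemLp (D j) ∞ P)
    (hμ : ∀ j < N, MemLp (μ j) ∞ P) (hY : MemLp Y ∞ P) {m : ℕ} (hm : m ≤ N) :
    MemLp (drPseudoOutcomeFrom D μ Y N m) ∞ P := by
  induction hm using Nat.decreasingInduction with
  | self => rwa [drPseudoOutcomeFrom_self]
  | of_succ k hk ih =>
    rw [drPseudoOutcomeFrom_of_lt hk]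
    exact (ih.mul (hD k hk)).add (((memLp_top_const 1).sub (hD k hk)).mul (hμ k hk))

end drPseudoOutcomeFrom

theorem condExp_div_mul_eq {g π Z μ : Ω → ℝ} (hπ : StronglyMeasurable[m] π)
    (hπ0 : ∀ᵐ x ∂P, π x ≠ 0) (hgZ : Integrable (g * Z) P) (hgπZ : Integrable (g / π * Z) P)
    (h : P[g * Z | m] =ᵐ[P] π * μ) : P[g / π * Z | m] =ᵐ[P] μ := by
  have hweight : g / π * Z = π⁻¹ * (g * Z) := by
    ext x
    simp only [Pi.mul_apply, Pi.div_apply, Pi.inv_apply]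
    ring
  rw [hweight] at hgπZ ⊢
  filter_upwards [condExp_mul_of_stronglyMeasurable_left hπ.measurable.inv.stronglyMeasurable
    hgπZ hgZ, h, hπ0] with x hx hgZx hπx
  rw [hx, Pi.mul_apply, hgZx, Pi.mul_apply, Pi.inv_apply, inv_mul_cancel_left₀ hπx]

section IsFiniteMeasure

variable [IsFiniteMeasure P]

theorem condExp_mul_one_sub_div_eq_zero (hm : m ≤ mΩ) {g π μ : Ω → ℝ}
    (hπ : StronglyMeasurable[m] π) (hπ0 : ∀ᵐ x ∂P, π x ≠ 0) (hπg : π =ᵐ[P] P[g | m])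
    (hμ : StronglyMeasurable[m] μ) (hg : MemLp g ∞ P) (hgπ : MemLp (g / π) ∞ P)
    (hμ_bdd : MemLp μ ∞ P) : P[μ * (1 - g / π) | m] =ᵐ[P] 0 := by
  have hμ_int := hμ_bdd.integrable le_top
  have hgμ : P[g * μ | m] =ᵐ[P] π * μ := by
    rw [mul_comm g]
    filter_upwards [condExp_mul_of_stronglyMeasurable_left hμ
      ((hg.mul hμ_bdd).integrable le_top) (hg.integrable le_top), hπg] with x hx hπx
    rw [hx, Pi.mul_apply, ← hπx, mul_comm, Pi.mul_apply]
  rw [show μ * (1 - g / π) = μ - g / π * μ by ring]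
  filter_upwards [condExp_sub hμ_int ((hμ_bdd.mul hgπ).integrable le_top) m,
    condExp_div_mul_eq hπ hπ0 ((hμ_bdd.mul hg).integrable le_top)
      ((hμ_bdd.mul hgπ).integrable le_top) hgμ] with x hsub hx
  rw [hsub, Pi.sub_apply, hx, condExp_of_stronglyMeasurable hm hμ hμ_int, sub_self, Pi.zero_apply]

theorem condExp_div_mul_add_mul_one_sub_div (hm : m ≤ mΩ) {g π μ Z : Ω → ℝ}
    (hπ : StronglyMeasurable[m] π) (hπ0 : ∀ᵐ x ∂P, π x ≠ 0) (hπg : π =ᵐ[P] P[g | m])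
    (hμ : StronglyMeasurable[m] μ) (hg : MemLp g ∞ P) (hgπ : MemLp (g / π) ∞ P)
    (hμ_bdd : MemLp μ ∞ P) (hZ : MemLp Z ∞ P) (h : P[g * Z | m] =ᵐ[P] π * μ) :
    P[g / π * Z + μ * (1 - g / π) | m] =ᵐ[P] μ := by
  have hμgπ : MemLp (μ * (1 - g / π)) ∞ P := ((memLp_top_const 1).sub hgπ).mul hμ_bdd
  filter_upwards [condExp_add ((hZ.mul hgπ).integrable le_top) (hμgπ.integrable le_top) m,
    condExp_div_mul_eq hπ hπ0 ((hZ.mul hg).integrable le_top) ((hZ.mul hgπ).integrable le_top) h,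
    condExp_mul_one_sub_div_eq_zero hm hπ hπ0 hπg hμ hg hgπ hμ_bdd] with x hadd hx h0
  rw [hadd, Pi.add_apply, hx, h0, Pi.zero_apply, add_zero]

theorem condExp_mul_eq_of_condExp_eq {m₁ m₂ : MeasurableSpace Ω} (h₁₂ : m₁ ≤ m₂) (hm₂ : m₂ ≤ mΩ)
    {f Z W : Ω → ℝ} (hf : StronglyMeasurable[m₂] f) (hfZ : Integrable (f * Z) P)
    (hZ : Integrable Z P) (h : P[Z | m₂] =ᵐ[P] W) : P[f * Z | m₁] =ᵐ[P] P[f * W | m₁] :=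
  (condExp_condExp_of_le h₁₂ hm₂).symm.trans <| condExp_congr_ae <|
    (condExp_mul_of_stronglyMeasurable_left hf hfZ hZ).trans (Filter.EventuallyEq.rfl.mul h)

theorem condExp_drPseudoOutcome {n : ℕ} {G : ℕ → MeasurableSpace Ω} (hG_mono : Monotone G)
    (hG_le : ∀ j, G j ≤ mΩ) {Y : Ω → ℝ} (hY : MemLp Y ∞ P)
    {A : ℕ → Set Ω} (hA : ∀ j ≤ n, MeasurableSet[G (j + 1)] (A j))
    {π : ℕ → Ω → ℝ} (hπ_meas : ∀ j ≤ n, StronglyMeasurable[G j] (π j))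
    {ε : ℝ} (hε : 0 < ε) (hπ_ge : ∀ j ≤ n, ∀ᵐ x ∂P, ε ≤ π j x)
    (hπ_ce : ∀ j ≤ n, π j =ᵐ[P] P[(A j).indicator 1 | G j])
    {μ : ℕ → Ω → ℝ} (hμ_meas : ∀ j ≤ n, StronglyMeasurable[G j] (μ j))
    (hμ : ∀ j ≤ n, MemLp (μ j) ∞ P)
    (hμ_n : P[(A n).indicator 1 * Y | G n] =ᵐ[P] π n * μ n)
    (hμ_rec : ∀ j < n, P[(A j).indicator 1 * μ (j + 1) | G j] =ᵐ[P] π j * μ j) :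
    Integrable (drPseudoOutcomeFrom (fun j => (A j).indicator 1 / π j) μ Y (n + 1) 0) P ∧
      P[drPseudoOutcomeFrom (fun j => (A j).indicator 1 / π j) μ Y (n + 1) 0 | G 0]
        =ᵐ[P] μ 0 := by
  set T := drPseudoOutcomeFrom (fun j => (A j).indicator 1 / π j) μ Y (n + 1)
  have hI : ∀ j ≤ n, MemLp ((A j).indicator (1 : Ω → ℝ)) ∞ P := fun j hj =>
    (memLp_top_const 1).indicator (hG_le _ _ (hA j hj))
  have hD : ∀ j ≤ n, MemLp ((A j).indicator 1 / π j) ∞ P := fun j hj =>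
    memLp_top_indicator_div (hG_le _ _ (hA j hj))
      ((hπ_meas j hj).mono (hG_le j)).aestronglyMeasurable hε (hπ_ge j hj)
  have hT : ∀ m ≤ n + 1, MemLp (T m) ∞ P := fun m hm =>
    memLp_top_drPseudoOutcomeFrom (fun j hj => hD j (Nat.lt_succ_iff.1 hj))
      (fun j hj => hμ j (Nat.lt_succ_iff.1 hj)) hY hm
  have hstep : ∀ k ≤ n, P[(A k).indicator 1 * T (k + 1) | G k] =ᵐ[P] π k * μ k →
      P[T k | G k] =ᵐ[P] μ k := fun k hk h => by
    rw [show T k = _ from drPseudoOutcomeFrom_of_lt (Nat.lt_succ_of_le hk)]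
    exact condExp_div_mul_add_mul_one_sub_div (hG_le k) (hπ_meas k hk)
      ((hπ_ge k hk).mono fun x hx => (hε.trans_le hx).ne') (hπ_ce k hk) (hμ_meas k hk)
      (hI k hk) (hD k hk) (hμ k hk) (hT _ (Nat.succ_le_succ hk)) h
  have hcond : ∀ m ≤ n, P[T m | G m] =ᵐ[P] μ m := fun m hm => by
    induction hm using Nat.decreasingInduction with
    | self => exact hstep n le_rfl (by rwa [show T (n + 1) = Y from drPseudoOutcomeFrom_self])
    | of_succ k hk ih =>
      have hT_succ : MemLp (T (k + 1)) ∞ P := hT _ (by omega)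
      exact hstep k hk.le <| (condExp_mul_eq_of_condExp_eq (hG_mono k.le_succ) (hG_le _)
        (stronglyMeasurable_const.indicator (hA k hk.le))
        ((hT_succ.mul (hI k hk.le)).integrable le_top) (hT_succ.integrable le_top) ih).trans
        (hμ_rec k hk)
  exact ⟨(hT 0 (Nat.zero_le _)).integrable le_top, hcond 0 (Nat.zero_le _)⟩

end IsFiniteMeasure

end PseudoOutcome

/-- **Lemma (conditional expectation of the DR pseudo-outcome, CATE case).**
For each arm `c ∈ {a, b}` with treatment events `A^c_j ∈ 𝒢_{j+1}`, propensities
`π^c_j = E[1_{A^c_j} | 𝒢_j]` with `ε ≤ π^c_j ≤ 1` a.s., and bounded `𝒢_j`-measurable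
response functions `μ^c_j` satisfying the recursion
`E[1_{A^c_n}·Y | 𝒢_n] = π^c_n·μ^c_n` and `E[1_{A^c_j}·μ^c_{j+1} | 𝒢_j] = π^c_j·μ^c_j`,
the DR pseudo-outcomes `γ^c` satisfy `E[γ^a − γ^b | 𝒢_0] = μ^a_0 − μ^b_0` P-a.s., i.e.
the conditional expectation of the DR pseudo-outcome for CATE given the initial history
equals the conditional average treatment effect. -/
theorem DR_pseudo_outcome_condexp_CATE
    {Ω : Type*} {F : MeasurableSpace Ω} {P : Measure Ω} [IsProbabilityMeasure P]
    (n : ℕ) (G : ℕ → MeasurableSpace Ω) (hG_mono : Monotone G) (hG_le : ∀ j, G j ≤ F)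
    (Y : Ω → ℝ) (hY_meas : Measurable Y) (CY : ℝ) (hY_bd : ∀ x, |Y x| ≤ CY)
    (Aa Ab : ℕ → Set Ω)
    (hAa : ∀ j ≤ n, MeasurableSet[G (j + 1)] (Aa j))
    (hAb : ∀ j ≤ n, MeasurableSet[G (j + 1)] (Ab j))
    (πa πb : ℕ → Ω → ℝ)
    (hπa_meas : ∀ j ≤ n, Measurable[G j] (πa j)) (hπb_meas : ∀ j ≤ n, Measurable[G j] (πb j))
    (ε : ℝ) (hε : 0 < ε)
    (hπa_bd : ∀ j ≤ n, ∀ᵐ x ∂P, ε ≤ πa j x ∧ πa j x ≤ 1)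
    (hπb_bd : ∀ j ≤ n, ∀ᵐ x ∂P, ε ≤ πb j x ∧ πb j x ≤ 1)
    (hπa_ce : ∀ j ≤ n, πa j =ᵐ[P] P[(Aa j).indicator (fun _ => (1 : ℝ)) | G j])
    (hπb_ce : ∀ j ≤ n, πb j =ᵐ[P] P[(Ab j).indicator (fun _ => (1 : ℝ)) | G j])
    (μa μb : ℕ → Ω → ℝ)
    (hμa_meas : ∀ j ≤ n, Measurable[G j] (μa j)) (hμb_meas : ∀ j ≤ n, Measurable[G j] (μb j))
    (Cμ : ℝ) (hμa_bd : ∀ j ≤ n, ∀ x, |μa j x| ≤ Cμ) (hμb_bd : ∀ j ≤ n, ∀ x, |μb j x| ≤ Cμ)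
    (hμa_n : P[fun x => (Aa n).indicator (fun _ => (1 : ℝ)) x * Y x | G n]
        =ᵐ[P] fun x => πa n x * μa n x)
    (hμb_n : P[fun x => (Ab n).indicator (fun _ => (1 : ℝ)) x * Y x | G n]
        =ᵐ[P] fun x => πb n x * μb n x)
    (hμa_rec : ∀ j < n,
        P[fun x => (Aa j).indicator (fun _ => (1 : ℝ)) x * μa (j + 1) x | G j]
          =ᵐ[P] fun x => πa j x * μa j x)
    (hμb_rec : ∀ j < n,
        P[fun x => (Ab j).indicator (fun _ => (1 : ℝ)) x * μb (j + 1) x | G j]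
          =ᵐ[P] fun x => πb j x * μb j x)
    (γa γb : Ω → ℝ)
    (hγa : γa = fun x =>
      (∏ j ∈ range (n + 1), (Aa j).indicator (fun _ => (1 : ℝ)) x / πa j x) * Y x
      + ∑ j ∈ range (n + 1),
          μa j x * (1 - (Aa j).indicator (fun _ => (1 : ℝ)) x / πa j x)
            * ∏ k ∈ range j, (Aa k).indicator (fun _ => (1 : ℝ)) x / πa k x)
    (hγb : γb = fun x =>
      (∏ j ∈ range (n + 1), (Ab j).indicator (fun _ => (1 : ℝ)) x / πb j x) * Y x
      + ∑ j ∈ range (n + 1),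
          μb j x * (1 - (Ab j).indicator (fun _ => (1 : ℝ)) x / πb j x)
            * ∏ k ∈ range j, (Ab k).indicator (fun _ => (1 : ℝ)) x / πb k x) :
    P[fun x => γa x - γb x | G 0] =ᵐ[P] fun x => μa 0 x - μb 0 x := by
  have hY : MemLp Y ∞ P := memLp_top_of_abs_le hY_meas.aestronglyMeasurable hY_bd
  obtain ⟨hγa_int, hγa_ce⟩ := condExp_drPseudoOutcome hG_mono hG_le hY hAa
    (fun j hj => (hπa_meas j hj).stronglyMeasurable) hε
    (fun j hj => (hπa_bd j hj).mono fun _ h => h.1) hπa_ce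
    (fun j hj => (hμa_meas j hj).stronglyMeasurable)
    (fun j hj => memLp_top_of_abs_le
      ((hμa_meas j hj).mono (hG_le j) le_rfl).aestronglyMeasurable (hμa_bd j hj))
    hμa_n hμa_rec
  obtain ⟨hγb_int, hγb_ce⟩ := condExp_drPseudoOutcome hG_mono hG_le hY hAb
    (fun j hj => (hπb_meas j hj).stronglyMeasurable) hε
    (fun j hj => (hπb_bd j hj).mono fun _ h => h.1) hπb_ce
    (fun j hj => (hμb_meas j hj).stronglyMeasurable)
    (fun j hj => memLp_top_of_abs_le
      ((hμb_meas j hj).mono (hG_le j) le_rfl).aestronglyMeasurable (hμb_bd j hj))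
    hμb_n hμb_rec
  rw [hγa.trans drPseudoOutcomeFrom_zero.symm, hγb.trans drPseudoOutcomeFrom_zero.symm]
  exact (condExp_sub hγa_int hγb_int _).trans (hγa_ce.sub hγb_ce)
end

section
/- Sequential inverse-propensity-weighting identity: E[(∏_{j=0}^{n} 1_{A_j}/π_j)·Y | 𝒢_0] = μ_0 P-almost surely; i.e., the inverse-propensity-weighted outcome is conditionally unbiased, given the initial history, for the conditional average potential outcome defined by the recursive response functions. -/
/-!
Backward induction on `k`: the weighted outcome `W_k Y`, with `W_k = ∏_{j=k}^{n} 1_{A_j} / π_j`,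
has `𝒢_k`-conditional mean `μ_k`. Conditioning first on `𝒢_{k+1}` pulls out the
`𝒢_{k+1}`-measurable factor `1_{A_k} / π_k` and turns `W_{k+1} Y` into `μ_{k+1}`; conditioning
then on `𝒢_k` pulls out `1 / π_k`, and the recursion `E[1_{A_k} μ_{k+1} | 𝒢_k] = π_k μ_k`
leaves `μ_k`. The bound `π_k ≥ ε` keeps all weights bounded, hence every product integrable.
-/

open MeasureTheory Finset

section

variable {Ω : Type*} {m₀ : MeasurableSpace Ω} {P : Measure Ω} {ε : ℝ}

lemma integrable_inv_mul_of_le {π g : Ω → ℝ} (hε : 0 < ε) (hπ : AEStronglyMeasurable π P)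
    (hπε : ∀ᵐ x ∂P, ε ≤ π x) (hg : Integrable g P) : Integrable (π⁻¹ * g) P :=
  hg.bdd_mul (c := ε⁻¹) hπ.aemeasurable.inv.aestronglyMeasurable <| hπε.mono fun x hx => by
    rw [Pi.inv_apply, norm_inv, Real.norm_of_nonneg (hε.le.trans hx)]
    exact inv_anti₀ hε hx

lemma integrable_indicator_div_mul {A : Set Ω} (hA : MeasurableSet A) {π Z : Ω → ℝ}
    (hε : 0 < ε) (hπ : AEStronglyMeasurable π P) (hπε : ∀ᵐ x ∂P, ε ≤ π x)
    (hZ : Integrable Z P) : Integrable (A.indicator 1 / π * Z) P := by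
  have hAZ : A.indicator 1 / π * Z = π⁻¹ * A.indicator Z := by
    ext x
    by_cases hx : x ∈ A <;> simp [hx, div_eq_inv_mul]
  exact hAZ ▸ integrable_inv_mul_of_le hε hπ hπε (hZ.indicator hA)

lemma condExp_inv_mul_of_condExp_eq_mul {m : MeasurableSpace Ω} (hm : m ≤ m₀)
    {π g μ : Ω → ℝ} (hε : 0 < ε) (hπ : Measurable[m] π) (hπε : ∀ᵐ x ∂P, ε ≤ π x)
    (hg : Integrable g P) (h : P[g | m] =ᵐ[P] π * μ) : P[π⁻¹ * g | m] =ᵐ[P] μ := by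
  have hπg := integrable_inv_mul_of_le hε (hπ.mono hm le_rfl).aestronglyMeasurable hπε hg
  filter_upwards [condExp_mul_of_stronglyMeasurable_left hπ.inv.stronglyMeasurable hπg hg, h,
    hπε] with x hpull hgx hπx
  rw [hpull, Pi.mul_apply, hgx, Pi.mul_apply, Pi.inv_apply,
    inv_mul_cancel_left₀ (hε.trans_le hπx).ne']

lemma condExp_indicator_div_mul_of_condExp_eq {m m' : MeasurableSpace Ω} (hmm' : m ≤ m')
    (hm' : m' ≤ m₀) [SigmaFinite (P.trim hm')] {A : Set Ω} (hA : MeasurableSet[m'] A)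
    {π Z ν μ : Ω → ℝ} (hε : 0 < ε) (hπ : Measurable[m] π) (hπε : ∀ᵐ x ∂P, ε ≤ π x)
    (hZ : Integrable Z P) (hZν : P[Z | m'] =ᵐ[P] ν)
    (hν : P[A.indicator 1 * ν | m] =ᵐ[P] π * μ) :
    P[A.indicator 1 / π * Z | m] =ᵐ[P] μ := by
  have hm : m ≤ m₀ := hmm'.trans hm'
  have hweight : StronglyMeasurable[m'] (A.indicator 1 / π) :=
    ((measurable_const.indicator hA).div (hπ.mono hmm' le_rfl)).stronglyMeasurable
  have hweightZ := integrable_indicator_div_mul (hm' _ hA) hε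
    (hπ.mono hm le_rfl).aestronglyMeasurable hπε hZ
  have hAν : Integrable (A.indicator 1 * ν) P := by
    have hAν_eq : A.indicator 1 * ν = A.indicator ν := by
      ext x
      by_cases hx : x ∈ A <;> simp [hx]
    exact hAν_eq ▸ (integrable_condExp.congr hZν).indicator (hm' _ hA)
  calc P[A.indicator 1 / π * Z | m]
      =ᵐ[P] P[P[A.indicator 1 / π * Z | m'] | m] := (condExp_condExp_of_le hmm' hm').symm
    _ =ᵐ[P] P[π⁻¹ * (A.indicator 1 * ν) | m] := by
      refine condExp_congr_ae ?_
      filter_upwards [condExp_mul_of_stronglyMeasurable_left hweight hweightZ hZ, hZν]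
        with x hpull hx
      rw [hpull, Pi.mul_apply, hx]
      simp only [Pi.mul_apply, Pi.div_apply, Pi.inv_apply]
      ring
    _ =ᵐ[P] μ := condExp_inv_mul_of_condExp_eq_mul hm hε hπ hπε hAν hν

noncomputable def ipwWeight (A : ℕ → Set Ω) (π : ℕ → Ω → ℝ) (k n : ℕ) : Ω → ℝ :=
  ∏ j ∈ Ico k (n + 1), (A j).indicator 1 / π j

lemma ipwWeight_self_succ (A : ℕ → Set Ω) (π : ℕ → Ω → ℝ) (n : ℕ) :
    ipwWeight A π (n + 1) n = 1 := by
  simp [ipwWeight]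

lemma ipwWeight_of_le {k n : ℕ} (A : ℕ → Set Ω) (π : ℕ → Ω → ℝ) (hk : k ≤ n) :
    ipwWeight A π k n = (A k).indicator 1 / π k * ipwWeight A π (k + 1) n :=
  prod_eq_prod_Ico_succ_bot (Nat.lt_succ_of_le hk) _

lemma condExp_ipwWeight_mul_eq [IsFiniteMeasure P] (n : ℕ) (G : ℕ → MeasurableSpace Ω)
    (hG_mono : Monotone G) (hG_le : ∀ j, G j ≤ m₀)
    (A : ℕ → Set Ω) (hA : ∀ j ≤ n, MeasurableSet[G (j + 1)] (A j))
    (π : ℕ → Ω → ℝ) (hπ : ∀ j ≤ n, Measurable[G j] (π j))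
    (hε : 0 < ε) (hπε : ∀ j ≤ n, ∀ᵐ x ∂P, ε ≤ π j x) {Y : Ω → ℝ} (hY : Integrable Y P)
    (μ : ℕ → Ω → ℝ) (hμ_n : P[(A n).indicator 1 * Y | G n] =ᵐ[P] π n * μ n)
    (hμ_rec : ∀ j < n, P[(A j).indicator 1 * μ (j + 1) | G j] =ᵐ[P] π j * μ j)
    {k : ℕ} (hk : k ≤ n) :
    Integrable (ipwWeight A π k n * Y) P ∧ P[ipwWeight A π k n * Y | G k] =ᵐ[P] μ k := by
  have hstep : ∀ j ≤ n,
      ipwWeight A π j n * Y = (A j).indicator 1 / π j * (ipwWeight A π (j + 1) n * Y) :=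
    fun j hj => by rw [ipwWeight_of_le A π hj, mul_assoc]
  have hint : ∀ j ≤ n, Integrable (ipwWeight A π (j + 1) n * Y) P →
      Integrable (ipwWeight A π j n * Y) P := fun j hj hZ => by
    rw [hstep j hj]
    exact integrable_indicator_div_mul (hG_le _ _ (hA j hj)) hε
      ((hπ j hj).mono (hG_le j) le_rfl).aestronglyMeasurable (hπε j hj) hZ
  induction hk using Nat.decreasingInduction with
  | self =>
    have hYn : ipwWeight A π (n + 1) n * Y = Y := by rw [ipwWeight_self_succ, one_mul]
    refine ⟨hint n le_rfl (by rwa [hYn]), ?_⟩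
    rw [hstep n le_rfl, hYn]
    -- the last stage is a step with `m' = m₀`, in which `Y` is its own conditional mean
    have : SigmaFinite (P.trim (le_refl m₀)) := by rw [trim_eq_self]; infer_instance
    exact condExp_indicator_div_mul_of_condExp_eq (hG_le n) le_rfl (hG_le _ _ (hA n le_rfl)) hε
      (hπ n le_rfl) (hπε n le_rfl) hY
      (condExp_of_aestronglyMeasurable' le_rfl hY.1 hY) hμ_n
  | of_succ j hj ih =>
    refine ⟨hint j hj.le ih.1, ?_⟩
    rw [hstep j hj.le]
    exact condExp_indicator_div_mul_of_condExp_eq (hG_mono j.le_succ) (hG_le _) (hA j hj.le) hε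
      (hπ j hj.le) (hπε j hj.le) ih.1 ih.2 (hμ_rec j hj)

end

theorem sequential_IPW_identity_general
    {Ω : Type*} {F : MeasurableSpace Ω} {P : Measure Ω} [IsProbabilityMeasure P]
    (n : ℕ) (G : ℕ → MeasurableSpace Ω) (hG_mono : Monotone G) (hG_le : ∀ j, G j ≤ F)
    (A : ℕ → Set Ω) (hA : ∀ j ≤ n, MeasurableSet[G (j + 1)] (A j))
    (π : ℕ → Ω → ℝ) (hπ_meas : ∀ j ≤ n, Measurable[G j] (π j))
    (ε : ℝ) (hε : 0 < ε) (hπ_bd : ∀ j ≤ n, ∀ᵐ x ∂P, ε ≤ π j x ∧ π j x ≤ 1)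
    (Y : Ω → ℝ) (hY_meas : Measurable Y) (CY : ℝ) (hY_bd : ∀ x, |Y x| ≤ CY)
    (μ : ℕ → Ω → ℝ)
    (hμ_n : P[fun x => (A n).indicator (fun _ => (1 : ℝ)) x * Y x | G n]
        =ᵐ[P] fun x => π n x * μ n x)
    (hμ_rec : ∀ j < n,
        P[fun x => (A j).indicator (fun _ => (1 : ℝ)) x * μ (j + 1) x | G j]
          =ᵐ[P] fun x => π j x * μ j x) :
    P[fun x => (∏ j ∈ range (n + 1), (A j).indicator (fun _ => (1 : ℝ)) x / π j x) * Y x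
        | G 0] =ᵐ[P] μ 0 := by
  have hY : Integrable Y P := .of_bound hY_meas.aestronglyMeasurable CY (ae_of_all _ hY_bd)
  have hW : (fun x => (∏ j ∈ range (n + 1), (A j).indicator (fun _ => (1 : ℝ)) x / π j x) * Y x)
      = ipwWeight A π 0 n * Y := by
    ext x
    simp only [ipwWeight, range_eq_Ico, Pi.mul_apply, Finset.prod_apply, Pi.div_apply]
    rfl
  rw [hW]
  exact (condExp_ipwWeight_mul_eq n G hG_mono hG_le A hA π hπ_meas hε
    (fun j hj => (hπ_bd j hj).mono fun _ h => h.1) hY μ hμ_n hμ_rec n.zero_le).2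

/-- **Sequential inverse-propensity-weighting identity.**
With a filtration `𝒢`, treatment events `A_j ∈ 𝒢_{j+1}`, propensities
`π_j = E[1_{A_j} | 𝒢_j]` with `ε ≤ π_j ≤ 1` a.s., a bounded outcome `Y`, and bounded
`𝒢_j`-measurable response functions `μ_j` defined recursively by
`E[1_{A_n}·Y | 𝒢_n] = π_n·μ_n` and `E[1_{A_j}·μ_{j+1} | 𝒢_j] = π_j·μ_j`, one has
`E[(∏_{j=0}^{n} 1_{A_j}/π_j)·Y | 𝒢_0] = μ_0` P-almost surely: the inverse-propensity-
weighted outcome is conditionally unbiased, given the initial history, for the conditional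
average potential outcome. -/
theorem sequential_IPW_identity
    {Ω : Type*} {F : MeasurableSpace Ω} {P : Measure Ω} [IsProbabilityMeasure P]
    (n : ℕ) (G : ℕ → MeasurableSpace Ω) (hG_mono : Monotone G) (hG_le : ∀ j, G j ≤ F)
    (A : ℕ → Set Ω) (hA : ∀ j ≤ n, MeasurableSet[G (j + 1)] (A j))
    (π : ℕ → Ω → ℝ) (hπ_meas : ∀ j ≤ n, Measurable[G j] (π j))
    (ε : ℝ) (hε : 0 < ε) (hπ_bd : ∀ j ≤ n, ∀ᵐ x ∂P, ε ≤ π j x ∧ π j x ≤ 1)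
    (hπ_ce : ∀ j ≤ n, π j =ᵐ[P] P[(A j).indicator (fun _ => (1 : ℝ)) | G j])
    (Y : Ω → ℝ) (hY_meas : Measurable Y) (CY : ℝ) (hY_bd : ∀ x, |Y x| ≤ CY)
    (μ : ℕ → Ω → ℝ) (hμ_meas : ∀ j ≤ n, Measurable[G j] (μ j))
    (Cμ : ℝ) (hμ_bd : ∀ j ≤ n, ∀ x, |μ j x| ≤ Cμ)
    (hμ_n : P[fun x => (A n).indicator (fun _ => (1 : ℝ)) x * Y x | G n]
        =ᵐ[P] fun x => π n x * μ n x)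
    (hμ_rec : ∀ j < n,
        P[fun x => (A j).indicator (fun _ => (1 : ℝ)) x * μ (j + 1) x | G j]
          =ᵐ[P] fun x => π j x * μ j x) :
    P[fun x => (∏ j ∈ range (n + 1), (A j).indicator (fun _ => (1 : ℝ)) x / π j x) * Y x
        | G 0] =ᵐ[P] μ 0 :=
  sequential_IPW_identity_general n G hG_mono hG_le A hA π hπ_meas ε hε hπ_bd Y hY_meas CY hY_bd μ
    hμ_n hμ_rec
end

section
/- The DR pseudo-outcome γ is exactly insensitive to perturbations of any single response-function nuisance: fix j₀ ∈ {0,…,n} and a bounded 𝒢_{j₀}-measurable δ : Ω → ℝ, and let γ̃ be obtained from γ := (∏_{j=0}^{n} 1_{A_j}/π_j)·Y + Σ_{j=0}^{n} μ_j·(1 − 1_{A_j}/π_j)·∏_{k=0}^{j−1} 1_{A_k}/π_k by replacing μ_{j₀} with μ_{j₀} + δ. Then E[γ̃ | 𝒢_0] = E[γ | 𝒢_0] P-almost surely (in particular ∫ γ̃ dP = ∫ γ dP). (This is the component of the Neyman-orthogonality of the DR pseudo-outcome with respect to the response functions used in the proof of Theorem 2.) -/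
/-!
The two pseudo-outcomes differ by `Z = δ W (1 - 1_{A_{j₀}} / π_{j₀})` with
`W = ∏_{k<j₀} 1_{A_k} / π_k`. The factor `δ W` is `𝒢_{j₀}`-measurable, so conditioning on `𝒢_{j₀}`
pulls it out and replaces `1_{A_{j₀}}` by its conditional expectation `π_{j₀}`, which kills `Z`.
The tower property then gives `E[Z | 𝒢₀] = 0`.
-/

open MeasureTheory Finset

section

variable {Ω : Type*} {m m₀ : MeasurableSpace Ω} {μ : Measure Ω}

/-- No integrability of `f` is needed: otherwise `f + g` is not integrable either and both
conditional expectations are `0`. -/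
theorem condExp_add_of_condExp_eq_zero {E : Type*} [NormedAddCommGroup E] [NormedSpace ℝ E]
    [CompleteSpace E] {f g : Ω → E} (hg : Integrable g μ) (hg₀ : μ[g | m] =ᵐ[μ] 0) :
    μ[f + g | m] =ᵐ[μ] μ[f | m] := by
  by_cases hf : Integrable f μ
  · filter_upwards [condExp_add hf hg m, hg₀] with x hadd hzero
    simp [hadd, hzero]
  · have hfg : ¬Integrable (f + g) μ := fun h => hf (by simpa using h.sub hg)
    rw [condExp_of_not_integrable hf, condExp_of_not_integrable hfg]

theorem condExp_eq_zero_of_le {m₁ m₂ : MeasurableSpace Ω} {f : Ω → ℝ} (hm₁₂ : m₁ ≤ m₂)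
    (hm₂ : m₂ ≤ m₀) [SigmaFinite (μ.trim hm₂)] (hf : μ[f | m₂] =ᵐ[μ] 0) : μ[f | m₁] =ᵐ[μ] 0 :=
  (condExp_condExp_of_le hm₁₂ hm₂).symm.trans (by simpa using condExp_congr_ae (m := m₁) hf)

theorem abs_prod_le_pow_card {ι : Type*} (s : Finset ι) {f : ι → ℝ} {c : ℝ}
    (h : ∀ i ∈ s, |f i| ≤ c) : |∏ i ∈ s, f i| ≤ c ^ #s := by
  rw [abs_prod]
  exact (prod_le_prod (fun _ _ => abs_nonneg _) h).trans_eq (prod_const c)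

variable {A : Set Ω} {π g : Ω → ℝ} {ε : ℝ}

theorem abs_indicator_one_div_le {x : Ω} (hε : 0 < ε) (hπ : ε ≤ π x) :
    |A.indicator (fun _ => (1 : ℝ)) x / π x| ≤ ε⁻¹ := by
  have hI : |A.indicator (fun _ => (1 : ℝ)) x| ≤ 1 := by
    simpa using norm_indicator_le_norm_self (fun _ => (1 : ℝ)) x
  rw [abs_div, abs_of_pos (hε.trans_le hπ), ← one_div]
  exact div_le_div₀ zero_le_one hI hε hπ

theorem MeasureTheory.Integrable.mul_one_sub_indicator_div (hg : Integrable g μ)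
    (hA : MeasurableSet A) (hπ : Measurable π) (hε : 0 < ε) (hπε : ∀ᵐ x ∂μ, ε ≤ π x) :
    Integrable (fun x => g x * (1 - A.indicator (fun _ => (1 : ℝ)) x / π x)) μ := by
  refine hg.mul_bdd (c := 1 + ε⁻¹)
    (measurable_const.sub ((measurable_const.indicator hA).div hπ)).aestronglyMeasurable ?_
  filter_upwards [hπε] with x hx
  have hw := abs_indicator_one_div_le (A := A) hε hx
  rw [Real.norm_eq_abs]
  exact (abs_sub _ _).trans (by rw [abs_one]; linarith)

/-- Pulling the `m`-measurable factor `g / π` out of `μ[g / π * 1_A | m]` leaves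
`μ[1_A | m] = π`. -/
theorem condExp_mul_one_sub_indicator_div_eq_zero [IsFiniteMeasure μ] (hm : m ≤ m₀)
    (hA : MeasurableSet[m₀] A) (hπm : Measurable[m] π) (hε : 0 < ε) (hπε : ∀ᵐ x ∂μ, ε ≤ π x)
    (hπ : π =ᵐ[μ] μ[A.indicator (fun _ => (1 : ℝ)) | m]) (hgm : Measurable[m] g)
    (hg : Integrable g μ) :
    μ[fun x => g x * (1 - A.indicator (fun _ => (1 : ℝ)) x / π x) | m] =ᵐ[μ] 0 := by
  set I := A.indicator (fun _ => (1 : ℝ))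
  have hdecomp : (fun x => g x * (1 - I x / π x)) = g - g / π * I := by
    funext x
    simp only [Pi.sub_apply, Pi.mul_apply, Pi.div_apply]
    ring
  have hweighted : Integrable (g / π * I) μ := by
    have h := hg.sub (hg.mul_one_sub_indicator_div hA (hπm.mono hm le_rfl) hε hπε)
    rwa [hdecomp, sub_sub_cancel] at h
  have hI : Integrable I μ := (integrable_const 1).indicator hA
  rw [hdecomp]
  filter_upwards [condExp_sub hg hweighted m,
    condExp_mul_of_stronglyMeasurable_left (hgm.div hπm).stronglyMeasurable hweighted hI,
    hπ, hπε] with x hsub hpull hπx hεx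
  rw [hsub, Pi.sub_apply, hpull, condExp_of_stronglyMeasurable hm hgm.stronglyMeasurable hg,
    Pi.mul_apply, ← hπx, Pi.div_apply, div_mul_cancel₀ _ (hε.trans_le hεx).ne', sub_self,
    Pi.zero_apply]

theorem abs_prod_range_indicator_div_le {A : ℕ → Set Ω} {π : ℕ → Ω → ℝ} {j : ℕ} {x : Ω}
    (hε : 0 < ε) (hπ : ∀ k < j, ε ≤ π k x) :
    |∏ k ∈ range j, (A k).indicator (fun _ => (1 : ℝ)) x / π k x| ≤ ε⁻¹ ^ j := by
  simpa using abs_prod_le_pow_card (range j)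
    fun k hk => abs_indicator_one_div_le (A := A k) hε (hπ k (mem_range.mp hk))

theorem measurable_prod_range_indicator_div {G : ℕ → MeasurableSpace Ω} {A : ℕ → Set Ω}
    {π : ℕ → Ω → ℝ} {j : ℕ} (hG : Monotone G) (hA : ∀ k < j, MeasurableSet[G (k + 1)] (A k))
    (hπ : ∀ k < j, Measurable[G k] (π k)) :
    Measurable[G j] fun x => ∏ k ∈ range j, (A k).indicator (fun _ => (1 : ℝ)) x / π k x := by
  refine Finset.measurable_prod _ fun k hk => ?_
  have hk : k + 1 ≤ j := mem_range.mp hk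
  exact ((measurable_const.indicator (hA k hk)).mono (hG hk) le_rfl).div
    ((hπ k hk).mono (hG (by omega)) le_rfl)

end

theorem DR_pseudo_outcome_orthogonal_response_general
    {Ω : Type*} {F : MeasurableSpace Ω} {P : Measure Ω} [IsProbabilityMeasure P]
    (n : ℕ) (G : ℕ → MeasurableSpace Ω) (hG_mono : Monotone G) (hG_le : ∀ j, G j ≤ F)
    (A : ℕ → Set Ω) (hA : ∀ j ≤ n, MeasurableSet[G (j + 1)] (A j))
    (π : ℕ → Ω → ℝ) (hπ_meas : ∀ j ≤ n, Measurable[G j] (π j))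
    (ε : ℝ) (hε : 0 < ε) (hπ_bd : ∀ j ≤ n, ∀ᵐ x ∂P, ε ≤ π j x ∧ π j x ≤ 1)
    (hπ_ce : ∀ j ≤ n, π j =ᵐ[P] P[(A j).indicator (fun _ => (1 : ℝ)) | G j])
    (Y : Ω → ℝ)
    (μ : ℕ → Ω → ℝ)
    (j₀ : ℕ) (hj₀ : j₀ ≤ n)
    (δ : Ω → ℝ) (hδ_meas : Measurable[G j₀] δ) (Cδ : ℝ) (hδ_bd : ∀ x, |δ x| ≤ Cδ)
    (μ' : ℕ → Ω → ℝ)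
    (hμ' : μ' = fun j => if j = j₀ then (fun x => μ j x + δ x) else μ j)
    (γ γ' : Ω → ℝ)
    (hγ : γ = fun x =>
      (∏ j ∈ range (n + 1), (A j).indicator (fun _ => (1 : ℝ)) x / π j x) * Y x
      + ∑ j ∈ range (n + 1),
          μ j x * (1 - (A j).indicator (fun _ => (1 : ℝ)) x / π j x)
            * ∏ k ∈ range j, (A k).indicator (fun _ => (1 : ℝ)) x / π k x)
    (hγ' : γ' = fun x =>
      (∏ j ∈ range (n + 1), (A j).indicator (fun _ => (1 : ℝ)) x / π j x) * Y x
      + ∑ j ∈ range (n + 1),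
          μ' j x * (1 - (A j).indicator (fun _ => (1 : ℝ)) x / π j x)
            * ∏ k ∈ range j, (A k).indicator (fun _ => (1 : ℝ)) x / π k x) :
    P[γ' | G 0] =ᵐ[P] P[γ | G 0] ∧ ∫ x, γ' x ∂P = ∫ x, γ x ∂P := by
  set W : Ω → ℝ := fun x => δ x * ∏ k ∈ range j₀, (A k).indicator (fun _ => (1 : ℝ)) x / π k x
  set Z : Ω → ℝ := fun x => W x * (1 - (A j₀).indicator (fun _ => (1 : ℝ)) x / π j₀ x)
  have hsplit : γ' = γ + Z := by
    have hμ'_apply (j : ℕ) (x : Ω) : μ' j x = μ j x + if j = j₀ then δ x else 0 := by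
      by_cases hj : j = j₀ <;> simp [hμ', hj]
    funext x
    simp only [hγ, hγ', Z, W, Pi.add_apply, hμ'_apply, add_mul, ite_mul, zero_mul,
      sum_add_distrib, sum_ite_eq', mem_range, Nat.lt_succ_of_le hj₀, if_true]
    ring
  have hW_meas : Measurable[G j₀] W := hδ_meas.mul <|
    measurable_prod_range_indicator_div hG_mono (fun k _ => hA k (by omega))
      (fun k _ => hπ_meas k (by omega))
  have hπε : ∀ᵐ x ∂P, ∀ j ≤ n, ε ≤ π j x := ae_all_iff.2 fun j =>
    Filter.eventually_imp_distrib_left.2 fun hj => (hπ_bd j hj).mono fun _ h => h.1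
  have hW_int : Integrable W P := by
    refine .of_bound (hW_meas.mono (hG_le j₀) le_rfl).aestronglyMeasurable (Cδ * ε⁻¹ ^ j₀) ?_
    filter_upwards [hπε] with x hx
    rw [Real.norm_eq_abs, abs_mul]
    exact mul_le_mul (hδ_bd x) (abs_prod_range_indicator_div_le hε fun k _ => hx k (by omega))
      (abs_nonneg _) ((abs_nonneg _).trans (hδ_bd x))
  have hπε₀ : ∀ᵐ x ∂P, ε ≤ π j₀ x := hπε.mono fun _ hx => hx j₀ hj₀
  have hZ_int : Integrable Z P := hW_int.mul_one_sub_indicator_div (hG_le _ _ (hA j₀ hj₀))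
    ((hπ_meas j₀ hj₀).mono (hG_le j₀) le_rfl) hε hπε₀
  have hZ : P[Z | G j₀] =ᵐ[P] 0 := condExp_mul_one_sub_indicator_div_eq_zero (hG_le j₀)
    (hG_le _ _ (hA j₀ hj₀)) (hπ_meas j₀ hj₀) hε hπε₀ (hπ_ce j₀ hj₀) hW_meas hW_int
  have hZ₀ : P[Z | G 0] =ᵐ[P] 0 := condExp_eq_zero_of_le (hG_mono (Nat.zero_le j₀)) (hG_le j₀) hZ
  have hce : P[γ' | G 0] =ᵐ[P] P[γ | G 0] := hsplit ▸ condExp_add_of_condExp_eq_zero hZ_int hZ₀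
  refine ⟨hce, ?_⟩
  rw [← integral_condExp (hG_le 0), integral_congr_ae hce, integral_condExp (hG_le 0)]

/-- **Exact insensitivity of the DR pseudo-outcome to perturbations of a single
response-function nuisance** (component of the Neyman-orthogonality of the DR
pseudo-outcome with respect to the response functions, used in the proof of Theorem 2).
Fix `j₀ ∈ {0,…,n}` and a bounded `𝒢_{j₀}`-measurable `δ`, and let `γ̃` be obtained from
`γ := (∏_{j=0}^{n} 1_{A_j}/π_j)·Y + Σ_{j=0}^{n} μ_j·(1 − 1_{A_j}/π_j)·∏_{k<j} 1_{A_k}/π_k`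
by replacing `μ_{j₀}` with `μ_{j₀} + δ`. Then `E[γ̃ | 𝒢_0] = E[γ | 𝒢_0]` P-almost surely,
and in particular `∫ γ̃ dP = ∫ γ dP`. -/
theorem DR_pseudo_outcome_orthogonal_response
    {Ω : Type*} {F : MeasurableSpace Ω} {P : Measure Ω} [IsProbabilityMeasure P]
    (n : ℕ) (G : ℕ → MeasurableSpace Ω) (hG_mono : Monotone G) (hG_le : ∀ j, G j ≤ F)
    (A : ℕ → Set Ω) (hA : ∀ j ≤ n, MeasurableSet[G (j + 1)] (A j))
    (π : ℕ → Ω → ℝ) (hπ_meas : ∀ j ≤ n, Measurable[G j] (π j))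
    (ε : ℝ) (hε : 0 < ε) (hπ_bd : ∀ j ≤ n, ∀ᵐ x ∂P, ε ≤ π j x ∧ π j x ≤ 1)
    (hπ_ce : ∀ j ≤ n, π j =ᵐ[P] P[(A j).indicator (fun _ => (1 : ℝ)) | G j])
    (Y : Ω → ℝ) (hY_meas : Measurable Y) (CY : ℝ) (hY_bd : ∀ x, |Y x| ≤ CY)
    (μ : ℕ → Ω → ℝ) (hμ_meas : ∀ j ≤ n, Measurable[G j] (μ j))
    (Cμ : ℝ) (hμ_bd : ∀ j ≤ n, ∀ x, |μ j x| ≤ Cμ)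
    (j₀ : ℕ) (hj₀ : j₀ ≤ n)
    (δ : Ω → ℝ) (hδ_meas : Measurable[G j₀] δ) (Cδ : ℝ) (hδ_bd : ∀ x, |δ x| ≤ Cδ)
    (μ' : ℕ → Ω → ℝ)
    (hμ' : μ' = fun j => if j = j₀ then (fun x => μ j x + δ x) else μ j)
    (γ γ' : Ω → ℝ)
    (hγ : γ = fun x =>
      (∏ j ∈ range (n + 1), (A j).indicator (fun _ => (1 : ℝ)) x / π j x) * Y x
      + ∑ j ∈ range (n + 1),
          μ j x * (1 - (A j).indicator (fun _ => (1 : ℝ)) x / π j x)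
            * ∏ k ∈ range j, (A k).indicator (fun _ => (1 : ℝ)) x / π k x)
    (hγ' : γ' = fun x =>
      (∏ j ∈ range (n + 1), (A j).indicator (fun _ => (1 : ℝ)) x / π j x) * Y x
      + ∑ j ∈ range (n + 1),
          μ' j x * (1 - (A j).indicator (fun _ => (1 : ℝ)) x / π j x)
            * ∏ k ∈ range j, (A k).indicator (fun _ => (1 : ℝ)) x / π k x) :
    P[γ' | G 0] =ᵐ[P] P[γ | G 0] ∧ ∫ x, γ' x ∂P = ∫ x, γ x ∂P :=
  DR_pseudo_outcome_orthogonal_response_general n G hG_mono hG_le A hA π hπ_meas ε hε hπ_bd hπ_ce Y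
    μ j₀ hj₀ δ hδ_meas Cδ hδ_bd μ' hμ' γ γ' hγ hγ'
end

section
/- The DR pseudo-outcome γ is first-order insensitive to perturbations of any single propensity-score nuisance: fix j₀ ∈ {0,…,n} and a bounded 𝒢_{j₀}-measurable δ : Ω → ℝ, and for r in a neighborhood of 0 small enough that π_{j₀} + r·δ ≥ ε/2 P-a.s., let γ_r be obtained from γ := (∏_{j=0}^{n} 1_{A_j}/π_j)·Y + Σ_{j=0}^{n} μ_j·(1 − 1_{A_j}/π_j)·∏_{k=0}^{j−1} 1_{A_k}/π_k by replacing π_{j₀} with π_{j₀} + r·δ in every occurrence, all other nuisances held fixed. Then the map r ↦ ∫ γ_r dP is differentiable at r = 0 with derivative 0. (This is the Neyman-orthogonality of the DR pseudo-outcome with respect to the propensity scores, Lemma B.1.) -/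
open MeasureTheory Finset
open scoped ENNReal

/-!
Put `μ_{n+1} := Y` and `w_j := 1_{A_j} / q_j` for any adapted propensities `q_j ≥ η > 0`. Abel
summation turns the pseudo-outcome into `μ_0 + ∑_j (∏_{k<j} w_k) w_j (μ_{j+1} - μ_j)`, and the
`j`-th summand has conditional mean zero given `𝒢_j`: its weight `(∏_{k<j} w_k) / q_j` is
`𝒢_j`-measurable, while `E[1_{A_j} μ_{j+1} | 𝒢_j] = π_j μ_j = E[1_{A_j} | 𝒢_j] μ_j`. Hence
`∫ γ = ∫ μ_0` for every such `q`; as `π_{j₀} + r δ ≥ ε/2` for small `|r|`, the map `r ↦ ∫ γ_r` is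
constant near `0`.
-/

section CondExp

variable {Ω : Type*} {F : MeasurableSpace Ω} {P : Measure Ω} [IsFiniteMeasure P]
  {m : MeasurableSpace Ω}

theorem integral_mul_condExp_eq (hm : m ≤ F) {c f : Ω → ℝ} (hc : StronglyMeasurable[m] c)
    (hc_bdd : MemLp c ∞ P) (hf : Integrable f P) :
    ∫ x, c x * P[f|m] x ∂P = ∫ x, c x * f x ∂P := calc
  _ = ∫ x, P[c * f|m] x ∂P := integral_congr_ae
        (condExp_mul_of_stronglyMeasurable_left hc (hf.mul_of_top_right hc_bdd) hf).symm
  _ = _ := integral_condExp hm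

theorem integral_mul_mul_eq_of_condExp_mul_ae_eq (hm : m ≤ F) {c g U V : Ω → ℝ}
    (hc : StronglyMeasurable[m] c) (hc_bdd : MemLp c ∞ P)
    (hV : StronglyMeasurable[m] V) (hV_bdd : MemLp V ∞ P)
    (hg : Integrable g P) (hgU : Integrable (g * U) P) (h : P[g * U|m] =ᵐ[P] P[g|m] * V) :
    ∫ x, c x * (g x * U x) ∂P = ∫ x, c x * (g x * V x) ∂P := calc
  _ = ∫ x, c x * P[g * U|m] x ∂P := (integral_mul_condExp_eq hm hc hc_bdd hgU).symm
  _ = ∫ x, (c x * V x) * P[g|m] x ∂P :=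
        integral_congr_ae (h.mono fun x hx => by simp only [hx, Pi.mul_apply]; ring)
  _ = ∫ x, (c x * V x) * g x ∂P := integral_mul_condExp_eq hm (hc.mul hV) (hV_bdd.mul' hc_bdd) hg
  _ = _ := by congr with x; ring

end CondExp

theorem prod_range_mul_add_sum_range_eq {R : Type*} [CommRing R] (w ν : ℕ → R) (m : ℕ) :
    (∏ j ∈ range m, w j) * ν m + ∑ j ∈ range m, ν j * (1 - w j) * ∏ k ∈ range j, w k
      = ν 0 + ∑ j ∈ range m, (∏ k ∈ range j, w k) * w j * (ν (j + 1) - ν j) := by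
  induction m with
  | zero => simp
  | succ m ih =>
    simp only [sum_range_succ, prod_range_succ]
    linear_combination ih

section PseudoOutcome

variable {Ω : Type*} {F : MeasurableSpace Ω} {P : Measure Ω}

noncomputable def ipWeight (s : Set Ω) (q : Ω → ℝ) (x : Ω) : ℝ :=
  s.indicator (fun _ => (1 : ℝ)) x / q x

/-- `ν j` is the response function `μ_j` for `j ≤ n`, and `ν (n + 1)` is the outcome `Y`. -/
noncomputable def drPseudoOutcome (n : ℕ) (A : ℕ → Set Ω) (q ν : ℕ → Ω → ℝ) (x : Ω) : ℝ :=
  (∏ j ∈ range (n + 1), ipWeight (A j) (q j) x) * ν (n + 1) x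
    + ∑ j ∈ range (n + 1),
        ν j x * (1 - ipWeight (A j) (q j) x) * ∏ k ∈ range j, ipWeight (A k) (q k) x

theorem drPseudoOutcome_eq_add_sum (n : ℕ) (A : ℕ → Set Ω) (q ν : ℕ → Ω → ℝ) (x : Ω) :
    drPseudoOutcome n A q ν x = ν 0 x + ∑ j ∈ range (n + 1),
      (∏ k ∈ range j, ipWeight (A k) (q k) x) * ipWeight (A j) (q j) x * (ν (j + 1) x - ν j x) :=
  prod_range_mul_add_sum_range_eq (fun j => ipWeight (A j) (q j) x) (fun j => ν j x) (n + 1)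

theorem drPseudoOutcome_update (n : ℕ) (A : ℕ → Set Ω) (q μ : ℕ → Ω → ℝ) (Y : Ω → ℝ) (x : Ω) :
    drPseudoOutcome n A q (Function.update μ (n + 1) Y) x =
      (∏ j ∈ range (n + 1), (A j).indicator (fun _ => (1 : ℝ)) x / q j x) * Y x
      + ∑ j ∈ range (n + 1),
          μ j x * (1 - (A j).indicator (fun _ => (1 : ℝ)) x / q j x)
            * ∏ k ∈ range j, (A k).indicator (fun _ => (1 : ℝ)) x / q k x := by
  simp only [drPseudoOutcome, ipWeight, Function.update_self]
  congr 1
  refine sum_congr rfl fun j hj => ?_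
  rw [Function.update_of_ne (by simp at hj; omega)]

theorem measurable_ipWeight {m : MeasurableSpace Ω} {s : Set Ω} {q : Ω → ℝ}
    (hs : MeasurableSet[m] s) (hq : Measurable[m] q) : Measurable[m] (ipWeight s q) :=
  (measurable_const.indicator hs).div hq

variable {η : ℝ}

theorem memLp_top_inv_of_le_s13 {q : Ω → ℝ} (hq : Measurable q) (hη : 0 < η) (h : ∀ᵐ x ∂P, η ≤ q x) :
    MemLp (fun x => (q x)⁻¹) ∞ P :=
  memLp_top_of_bound hq.inv.aestronglyMeasurable η⁻¹ (h.mono fun x hx => by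
    rw [norm_inv, Real.norm_of_nonneg (hη.le.trans hx)]
    exact inv_anti₀ hη hx)

theorem memLp_top_ipWeight {s : Set Ω} {q : Ω → ℝ} (hs : MeasurableSet s) (hq : Measurable q)
    (hη : 0 < η) (h : ∀ᵐ x ∂P, η ≤ q x) : MemLp (ipWeight s q) ∞ P :=
  (memLp_top_inv_of_le_s13 hq hη h).mul' ((memLp_top_const 1).indicator hs)

theorem memLp_top_prod_ipWeight {A : ℕ → Set Ω} {q : ℕ → Ω → ℝ} {s : Finset ℕ}
    (hA : ∀ k ∈ s, MeasurableSet (A k)) (hq_meas : ∀ k ∈ s, Measurable (q k)) (hη : 0 < η)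
    (hq_bd : ∀ k ∈ s, ∀ᵐ x ∂P, η ≤ q k x) :
    MemLp (fun x => ∏ k ∈ s, ipWeight (A k) (q k) x) ∞ P := by
  simpa using MemLp.prod' (p := fun _ => ∞) fun k hk =>
    memLp_top_ipWeight (hA k hk) (hq_meas k hk) hη (hq_bd k hk)

variable [IsFiniteMeasure P] {G : ℕ → MeasurableSpace Ω} {n : ℕ} {A : ℕ → Set Ω}
  {q ν : ℕ → Ω → ℝ}

theorem integral_prod_ipWeight_mul_sub_eq_zero (hG_mono : Monotone G) (hG_le : ∀ j, G j ≤ F)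
    (hA : ∀ j ≤ n, MeasurableSet[G (j + 1)] (A j)) (hq_meas : ∀ j ≤ n, Measurable[G j] (q j))
    (hη : 0 < η) (hq_bd : ∀ j ≤ n, ∀ᵐ x ∂P, η ≤ q j x)
    (hν_meas : ∀ j ≤ n, Measurable[G j] (ν j)) (hν_bdd : ∀ j ≤ n + 1, MemLp (ν j) ∞ P)
    (hν_rec : ∀ j ≤ n, P[fun x => (A j).indicator (fun _ => (1 : ℝ)) x * ν (j + 1) x | G j]
      =ᵐ[P] P[(A j).indicator (fun _ => (1 : ℝ)) | G j] * ν j)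
    {j : ℕ} (hj : j ≤ n) :
    ∫ x, (∏ k ∈ range j, ipWeight (A k) (q k) x) * ipWeight (A j) (q j) x
      * (ν (j + 1) x - ν j x) ∂P = 0 := by
  set I := (A j).indicator (fun _ => (1 : ℝ))
  set c := fun x => (∏ k ∈ range j, ipWeight (A k) (q k) x) * (q j x)⁻¹
  have hc_meas : Measurable[G j] c := by
    refine (Finset.measurable_prod _ fun k hk => ?_).mul (hq_meas j hj).inv
    have hkj : k + 1 ≤ j := mem_range.1 hk
    exact (measurable_ipWeight (hA k (by omega))
      ((hq_meas k (by omega)).mono (hG_mono k.le_succ) le_rfl)).mono (hG_mono hkj) le_rfl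
  have hk_le : ∀ k ∈ range j, k ≤ n := fun k hk => by have := mem_range.1 hk; omega
  have hc_bdd : MemLp c ∞ P :=
    (memLp_top_inv_of_le_s13 ((hq_meas j hj).mono (hG_le j) le_rfl) hη (hq_bd j hj)).mul'
      (memLp_top_prod_ipWeight (fun k hk => hG_le _ _ (hA k (hk_le k hk)))
        (fun k hk => (hq_meas k (hk_le k hk)).mono (hG_le k) le_rfl) hη
        (fun k hk => hq_bd k (hk_le k hk)))
  have hI : MemLp I ∞ P := (memLp_top_const 1).indicator (hG_le _ _ (hA j hj))
  have hIν : ∀ i ≤ n + 1, Integrable (I * ν i) P := fun i hi =>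
    ((hν_bdd i hi).integrable le_top).mul_of_top_right hI
  have hνν := integral_mul_mul_eq_of_condExp_mul_ae_eq (hG_le j) hc_meas.stronglyMeasurable
    hc_bdd (hν_meas j hj).stronglyMeasurable (hν_bdd j (by omega)) (hI.integrable le_top)
    (hIν (j + 1) (by omega)) (hν_rec j hj)
  calc _ = ∫ x, c x * (I x * ν (j + 1) x) - c x * (I x * ν j x) ∂P := by
        congr with x
        simp only [ipWeight, c, I]
        ring
    _ = (∫ x, c x * (I x * ν (j + 1) x) ∂P) - ∫ x, c x * (I x * ν j x) ∂P :=
        integral_sub ((hIν _ (by omega)).mul_of_top_right hc_bdd)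
          ((hIν _ (by omega)).mul_of_top_right hc_bdd)
    _ = 0 := by rw [hνν, sub_self]

theorem integral_drPseudoOutcome (hG_mono : Monotone G) (hG_le : ∀ j, G j ≤ F)
    (hA : ∀ j ≤ n, MeasurableSet[G (j + 1)] (A j)) (hq_meas : ∀ j ≤ n, Measurable[G j] (q j))
    (hη : 0 < η) (hq_bd : ∀ j ≤ n, ∀ᵐ x ∂P, η ≤ q j x)
    (hν_meas : ∀ j ≤ n, Measurable[G j] (ν j)) (hν_bdd : ∀ j ≤ n + 1, MemLp (ν j) ∞ P)
    (hν_rec : ∀ j ≤ n, P[fun x => (A j).indicator (fun _ => (1 : ℝ)) x * ν (j + 1) x | G j]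
      =ᵐ[P] P[(A j).indicator (fun _ => (1 : ℝ)) | G j] * ν j) :
    ∫ x, drPseudoOutcome n A q ν x ∂P = ∫ x, ν 0 x ∂P := by
  have hterm : ∀ j ∈ range (n + 1), Integrable (fun x => (∏ k ∈ range j, ipWeight (A k) (q k) x)
      * ipWeight (A j) (q j) x * (ν (j + 1) x - ν j x)) P := by
    intro j hj
    have hj : j ≤ n := Nat.lt_succ_iff.1 (mem_range.1 hj)
    have hk_le : ∀ k ∈ range (j + 1), k ≤ n := fun k hk => by have := mem_range.1 hk; omega
    have hprod := memLp_top_prod_ipWeight (P := P) (fun k hk => hG_le _ _ (hA k (hk_le k hk)))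
      (fun k hk => (hq_meas k (hk_le k hk)).mono (hG_le k) le_rfl) hη
      (fun k hk => hq_bd k (hk_le k hk))
    simp only [prod_range_succ] at hprod
    exact (((hν_bdd _ (by omega)).sub (hν_bdd j (by omega))).mul' hprod).integrable le_top
  simp_rw [drPseudoOutcome_eq_add_sum]
  rw [integral_add ((hν_bdd 0 (by omega)).integrable le_top) (integrable_finsetSum _ hterm),
    integral_finsetSum _ hterm, sum_eq_zero fun j hj => integral_prod_ipWeight_mul_sub_eq_zero
      hG_mono hG_le hA hq_meas hη hq_bd hν_meas hν_bdd hν_rec (Nat.lt_succ_iff.1 (mem_range.1 hj)),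
    add_zero]

theorem integral_drPseudoOutcome_update (hG_mono : Monotone G) (hG_le : ∀ j, G j ≤ F)
    (hA : ∀ j ≤ n, MeasurableSet[G (j + 1)] (A j)) (hq_meas : ∀ j ≤ n, Measurable[G j] (q j))
    (hη : 0 < η) (hq_bd : ∀ j ≤ n, ∀ᵐ x ∂P, η ≤ q j x) {π : ℕ → Ω → ℝ}
    (hπ_ce : ∀ j ≤ n, π j =ᵐ[P] P[(A j).indicator (fun _ => (1 : ℝ)) | G j])
    {Y : Ω → ℝ} (hY_meas : Measurable Y) {CY : ℝ} (hY_bd : ∀ x, |Y x| ≤ CY)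
    {μ : ℕ → Ω → ℝ} (hμ_meas : ∀ j ≤ n, Measurable[G j] (μ j))
    {Cμ : ℝ} (hμ_bd : ∀ j ≤ n, ∀ x, |μ j x| ≤ Cμ)
    (hμ_n : P[fun x => (A n).indicator (fun _ => (1 : ℝ)) x * Y x | G n]
        =ᵐ[P] fun x => π n x * μ n x)
    (hμ_rec : ∀ j < n,
        P[fun x => (A j).indicator (fun _ => (1 : ℝ)) x * μ (j + 1) x | G j]
          =ᵐ[P] fun x => π j x * μ j x) :
    ∫ x, drPseudoOutcome n A q (Function.update μ (n + 1) Y) x ∂P = ∫ x, μ 0 x ∂P := by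
  set ν := Function.update μ (n + 1) Y
  have hν_le : ∀ j ≤ n, ν j = μ j := fun j hj => Function.update_of_ne (by omega) _ _
  have hνY : ν (n + 1) = Y := Function.update_self _ _ _
  have hν_meas : ∀ j ≤ n, Measurable[G j] (ν j) := fun j hj => hν_le j hj ▸ hμ_meas j hj
  have hν_bdd : ∀ j ≤ n + 1, MemLp (ν j) ∞ P := by
    intro j hj
    rcases hj.lt_or_eq with hj | rfl
    · rw [hν_le j (by omega)]
      exact memLp_top_of_bound ((hμ_meas j (by omega)).mono (hG_le j) le_rfl).aestronglyMeasurable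
        Cμ (.of_forall (hμ_bd j (by omega)))
    · rw [hνY]
      exact memLp_top_of_bound hY_meas.aestronglyMeasurable CY (.of_forall hY_bd)
  have hν_rec : ∀ j ≤ n, P[fun x => (A j).indicator (fun _ => (1 : ℝ)) x * ν (j + 1) x | G j]
      =ᵐ[P] P[(A j).indicator (fun _ => (1 : ℝ)) | G j] * ν j := by
    intro j hj
    refine Filter.EventuallyEq.trans ?_ ((hπ_ce j hj).mul (ae_eq_refl (ν j)))
    rcases hj.lt_or_eq with hj | rfl
    · rw [hν_le j hj.le, hν_le (j + 1) hj]
      exact hμ_rec j hj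
    · rw [hν_le j le_rfl, hνY]
      exact hμ_n
  rw [integral_drPseudoOutcome hG_mono hG_le hA hq_meas hη hq_bd hν_meas hν_bdd hν_rec,
    hν_le 0 (Nat.zero_le n)]

end PseudoOutcome

theorem half_le_add_mul_of_abs_mul_lt {a b r C ε : ℝ} (ha : ε ≤ a) (hb : |b| ≤ C)
    (hr : |r| * C < ε / 2) : ε / 2 ≤ a + r * b := by
  have : |r * b| ≤ |r| * C := by
    rw [abs_mul]
    exact mul_le_mul_of_nonneg_left hb (abs_nonneg r)
  linarith [neg_abs_le (r * b)]

theorem DR_pseudo_outcome_orthogonal_propensity_general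
    {Ω : Type*} {F : MeasurableSpace Ω} {P : Measure Ω} [IsProbabilityMeasure P]
    (n : ℕ) (G : ℕ → MeasurableSpace Ω) (hG_mono : Monotone G) (hG_le : ∀ j, G j ≤ F)
    (A : ℕ → Set Ω) (hA : ∀ j ≤ n, MeasurableSet[G (j + 1)] (A j))
    (π : ℕ → Ω → ℝ) (hπ_meas : ∀ j ≤ n, Measurable[G j] (π j))
    (ε : ℝ) (hε : 0 < ε) (hπ_bd : ∀ j ≤ n, ∀ᵐ x ∂P, ε ≤ π j x ∧ π j x ≤ 1)
    (hπ_ce : ∀ j ≤ n, π j =ᵐ[P] P[(A j).indicator (fun _ => (1 : ℝ)) | G j])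
    (Y : Ω → ℝ) (hY_meas : Measurable Y) (CY : ℝ) (hY_bd : ∀ x, |Y x| ≤ CY)
    (μ : ℕ → Ω → ℝ) (hμ_meas : ∀ j ≤ n, Measurable[G j] (μ j))
    (Cμ : ℝ) (hμ_bd : ∀ j ≤ n, ∀ x, |μ j x| ≤ Cμ)
    (hμ_n : P[fun x => (A n).indicator (fun _ => (1 : ℝ)) x * Y x | G n]
        =ᵐ[P] fun x => π n x * μ n x)
    (hμ_rec : ∀ j < n,
        P[fun x => (A j).indicator (fun _ => (1 : ℝ)) x * μ (j + 1) x | G j]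
          =ᵐ[P] fun x => π j x * μ j x)
    (j₀ : ℕ)
    (δ : Ω → ℝ) (hδ_meas : Measurable[G j₀] δ) (Cδ : ℝ) (hδ_bd : ∀ x, |δ x| ≤ Cδ)
    (πr : ℝ → ℕ → Ω → ℝ)
    (hπr : πr = fun r j x => if j = j₀ then π j x + r * δ x else π j x)
    (γr : ℝ → Ω → ℝ)
    (hγr : γr = fun r x =>
      (∏ j ∈ range (n + 1), (A j).indicator (fun _ => (1 : ℝ)) x / πr r j x) * Y x
      + ∑ j ∈ range (n + 1),
          μ j x * (1 - (A j).indicator (fun _ => (1 : ℝ)) x / πr r j x)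
            * ∏ k ∈ range j, (A k).indicator (fun _ => (1 : ℝ)) x / πr r k x) :
    HasDerivAt (fun r : ℝ => ∫ x, γr r x ∂P) 0 0 := by
  have hsmall : ∀ᶠ r in nhds (0 : ℝ), |r| * Cδ < ε / 2 :=
    (continuous_abs.mul continuous_const).continuousAt.eventually_lt continuousAt_const
      (by simpa using half_pos hε)
  have hconst : (fun r => ∫ x, γr r x ∂P) =ᶠ[nhds 0] fun _ => ∫ x, μ 0 x ∂P := by
    filter_upwards [hsmall] with r hr
    have hγ : γr r = drPseudoOutcome n A (πr r) (Function.update μ (n + 1) Y) := by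
      funext x
      rw [drPseudoOutcome_update, hγr]
    have hq_meas : ∀ j ≤ n, Measurable[G j] (πr r j) := by
      intro j hj
      simp only [hπr]
      split_ifs with h
      · subst h
        exact (hπ_meas j hj).add (hδ_meas.const_mul r)
      · exact hπ_meas j hj
    have hq_bd : ∀ j ≤ n, ∀ᵐ x ∂P, ε / 2 ≤ πr r j x := fun j hj =>
      (hπ_bd j hj).mono fun x hx => by
        simp only [hπr]
        split_ifs
        exacts [half_le_add_mul_of_abs_mul_lt hx.1 (hδ_bd x) hr, by linarith [hx.1]]
    rw [hγ, integral_drPseudoOutcome_update hG_mono hG_le hA hq_meas (half_pos hε) hq_bd hπ_ce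
      hY_meas hY_bd hμ_meas hμ_bd hμ_n hμ_rec]
  exact (hasDerivAt_const 0 _).congr_of_eventuallyEq hconst

/-- **First-order insensitivity of the DR pseudo-outcome to perturbations of a single
propensity-score nuisance (Neyman-orthogonality w.r.t. the propensity scores, Lemma B.1).**
Fix `j₀ ∈ {0,…,n}` and a bounded `𝒢_{j₀}`-measurable `δ`, and for `r : ℝ` let `γ_r` be
obtained from
`γ := (∏_{j=0}^{n} 1_{A_j}/π_j)·Y + Σ_{j=0}^{n} μ_j·(1 − 1_{A_j}/π_j)·∏_{k<j} 1_{A_k}/π_k`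
by replacing `π_{j₀}` with `π_{j₀} + r·δ` in every occurrence, all other nuisances held
fixed. Then the map `r ↦ ∫ γ_r dP` is differentiable at `r = 0` with derivative `0`. -/
theorem DR_pseudo_outcome_orthogonal_propensity
    {Ω : Type*} {F : MeasurableSpace Ω} {P : Measure Ω} [IsProbabilityMeasure P]
    (n : ℕ) (G : ℕ → MeasurableSpace Ω) (hG_mono : Monotone G) (hG_le : ∀ j, G j ≤ F)
    (A : ℕ → Set Ω) (hA : ∀ j ≤ n, MeasurableSet[G (j + 1)] (A j))
    (π : ℕ → Ω → ℝ) (hπ_meas : ∀ j ≤ n, Measurable[G j] (π j))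
    (ε : ℝ) (hε : 0 < ε) (hπ_bd : ∀ j ≤ n, ∀ᵐ x ∂P, ε ≤ π j x ∧ π j x ≤ 1)
    (hπ_ce : ∀ j ≤ n, π j =ᵐ[P] P[(A j).indicator (fun _ => (1 : ℝ)) | G j])
    (Y : Ω → ℝ) (hY_meas : Measurable Y) (CY : ℝ) (hY_bd : ∀ x, |Y x| ≤ CY)
    (μ : ℕ → Ω → ℝ) (hμ_meas : ∀ j ≤ n, Measurable[G j] (μ j))
    (Cμ : ℝ) (hμ_bd : ∀ j ≤ n, ∀ x, |μ j x| ≤ Cμ)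
    (hμ_n : P[fun x => (A n).indicator (fun _ => (1 : ℝ)) x * Y x | G n]
        =ᵐ[P] fun x => π n x * μ n x)
    (hμ_rec : ∀ j < n,
        P[fun x => (A j).indicator (fun _ => (1 : ℝ)) x * μ (j + 1) x | G j]
          =ᵐ[P] fun x => π j x * μ j x)
    (j₀ : ℕ) (hj₀ : j₀ ≤ n)
    (δ : Ω → ℝ) (hδ_meas : Measurable[G j₀] δ) (Cδ : ℝ) (hδ_bd : ∀ x, |δ x| ≤ Cδ)
    (πr : ℝ → ℕ → Ω → ℝ)
    (hπr : πr = fun r j x => if j = j₀ then π j x + r * δ x else π j x)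
    (γr : ℝ → Ω → ℝ)
    (hγr : γr = fun r x =>
      (∏ j ∈ range (n + 1), (A j).indicator (fun _ => (1 : ℝ)) x / πr r j x) * Y x
      + ∑ j ∈ range (n + 1),
          μ j x * (1 - (A j).indicator (fun _ => (1 : ℝ)) x / πr r j x)
            * ∏ k ∈ range j, (A k).indicator (fun _ => (1 : ℝ)) x / πr r k x) :
    HasDerivAt (fun r : ℝ => ∫ x, γr r x ∂P) 0 0 :=
  DR_pseudo_outcome_orthogonal_propensity_general n G hG_mono hG_le A hA π hπ_meas ε hε hπ_bd hπ_ce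
    Y hY_meas CY hY_bd μ hμ_meas Cμ hμ_bd hμ_n hμ_rec j₀ δ hδ_meas Cδ hδ_bd πr hπr γr hγr
end

section
/- The variable ρ is insensitive in expectation to perturbations of any single propensity-score nuisance when the weight functions are held at their true values: fix j₀ ∈ {0,…,n} and a bounded 𝒢_{j₀}-measurable δ : Ω → ℝ, and let ρ̃ be obtained from ρ := ∏_{j=0}^{n} π_j + Σ_{j=0}^{n} (1_{A_j} − π_j)·w_j·∏_{k=0}^{j−1} π_k by replacing π_{j₀} with π_{j₀} + δ in every occurrence (the w_j held fixed). Then ∫ ρ̃ dP = ∫ ρ dP. (Since ρ is affine in π_{j₀}, this exact invariance expresses the Neyman-orthogonality of ρ with respect to the propensity scores, Lemma B.2.) -/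
open MeasureTheory Finset

/-!
Replace the propensity scores by any bounded adapted family `p`. Each correction term of `ρ` splits
as `(1_{A_j} - π_j) h_j - (p_j - π_j) h_j` with `h_j = w_j ∏_{k<j} p_k` bounded and
`𝒢_j`-measurable; the first part has mean zero because `π_j = E[1_{A_j} | 𝒢_j]`, so
`E ρ(p) = E ∏ p - ∑_j E[(p_j - π_j) h_j]`. For `p = π` this is `E ∏ π`. For the perturbation of
`π_{j₀}` by `δ` only `j = j₀` survives, leaving `E[δ w_{j₀} ∏_{k<j₀} π_k]`, which by the tower
property for `w_{j₀} = E[∏_{k>j₀} π_k | 𝒢_{j₀}]` equals `E[δ ∏_{k≠j₀} π_k] = E ∏ p - E ∏ π`.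
-/

theorem MeasureTheory.MemLp.finset_prod_top {ι Ω 𝕜 : Type*} [NormedCommRing 𝕜]
    {m0 : MeasurableSpace Ω} {μ : Measure Ω} {s : Finset ι} {f : ι → Ω → 𝕜} (hf : ∀ i ∈ s, MemLp (f i) ⊤ μ) :
    MemLp (fun x => ∏ i ∈ s, f i x) ⊤ μ := by
  simpa using MemLp.prod' hf

theorem Finset.prod_range_succ_eq_mul_prod_Icc {M : Type*} [CommMonoid M] (a : ℕ → M) {j n : ℕ}
    (h : j ≤ n) :
    ∏ k ∈ range (n + 1), a k = (∏ k ∈ range j, a k) * a j * ∏ k ∈ Icc (j + 1) n, a k := by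
  rw [← prod_range_succ, ← prod_range_mul_prod_Ico a (by omega : j + 1 ≤ n + 1),
    Ico_add_one_right_eq_Icc]

theorem Finset.prod_range_succ_ite_add {R : Type*} [CommRing R] (a : ℕ → R) (d : R) {j₀ n : ℕ}
    (h : j₀ ≤ n) :
    ∏ k ∈ range (n + 1), (if k = j₀ then a k + d else a k)
      = ∏ k ∈ range (n + 1), a k + d * (∏ k ∈ range j₀, a k) * ∏ k ∈ Icc (j₀ + 1) n, a k := by
  rw [prod_range_succ_eq_mul_prod_Icc _ h, prod_range_succ_eq_mul_prod_Icc _ h, if_pos rfl,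
    prod_congr rfl fun k hk => if_neg (by rw [mem_range] at hk; omega),
    prod_congr rfl fun k hk => if_neg (by rw [mem_Icc] at hk; omega)]
  ring

section ConditionalExpectation

variable {Ω : Type*} {m m0 : MeasurableSpace Ω} {μ : Measure Ω} [IsFiniteMeasure μ]

theorem integral_mul_condExp (hm : m ≤ m0) {f g : Ω → ℝ} (hf : AEStronglyMeasurable[m] f μ)
    (hfg : Integrable (f * g) μ) (hg : Integrable g μ) :
    ∫ x, f x * μ[g|m] x ∂μ = ∫ x, f x * g x ∂μ :=
  calc ∫ x, f x * μ[g|m] x ∂μ = ∫ x, μ[f * g|m] x ∂μ :=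
        integral_congr_ae (condExp_mul_of_aestronglyMeasurable_left hf hfg hg).symm
    _ = ∫ x, f x * g x ∂μ := integral_condExp hm

theorem integral_sub_condExp_mul_eq_zero (hm : m ≤ m0) {f g : Ω → ℝ} (hf : Integrable f μ)
    (hg : AEStronglyMeasurable[m] g μ) (hg_bdd : MemLp g ⊤ μ) :
    ∫ x, (f x - μ[f|m] x) * g x ∂μ = 0 := by
  have hgf : Integrable (g * f) μ := hf.mul_of_top_right hg_bdd
  have hgf' : Integrable (g * μ[f|m]) μ := integrable_condExp.mul_of_top_right hg_bdd
  calc ∫ x, (f x - μ[f|m] x) * g x ∂μ = ∫ x, (g x * f x - g x * μ[f|m] x) ∂μ := by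
        congr 1 with x; ring
    _ = ∫ x, g x * f x ∂μ - ∫ x, g x * μ[f|m] x ∂μ := integral_sub hgf hgf'
    _ = 0 := by rw [integral_mul_condExp hm hg hgf hf, sub_self]

end ConditionalExpectation

section Rho

variable {Ω : Type*} {m0 : MeasurableSpace Ω} {P : Measure Ω} {G : ℕ → MeasurableSpace Ω}

def rho (n : ℕ) (Y w p : ℕ → Ω → ℝ) (x : Ω) : ℝ :=
  (∏ j ∈ range (n + 1), p j x)
    + ∑ j ∈ range (n + 1), (Y j x - p j x) * w j x * ∏ k ∈ range j, p k x

theorem measurable_prod_range_of_monotone (hG : Monotone G) {p : ℕ → Ω → ℝ} {j : ℕ}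
    (hp : ∀ k < j, Measurable[G k] (p k)) : Measurable[G j] (fun x => ∏ k ∈ range j, p k x) :=
  Finset.measurable_prod _ fun k hk =>
    (hp k (mem_range.1 hk)).mono (hG (mem_range.1 hk).le) le_rfl

variable [IsFiniteMeasure P]

theorem ae_eq_condExp_prod_Icc_of_le (hG_le : ∀ j, G j ≤ m0) {n j : ℕ} {π w : ℕ → Ω → ℝ}
    (hw : ∀ j < n, w j =ᵐ[P] P[fun x => ∏ k ∈ Icc (j + 1) n, π k x | G j])
    (hw_n : w n = fun _ => (1 : ℝ)) (hj : j ≤ n) :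
    w j =ᵐ[P] P[fun x => ∏ k ∈ Icc (j + 1) n, π k x | G j] := by
  rcases hj.lt_or_eq with hj | rfl
  · exact hw j hj
  · simp [hw_n, condExp_const (hG_le j)]

theorem integral_rho (hG_mono : Monotone G) (hG_le : ∀ j, G j ≤ m0) {n : ℕ}
    {Y π w p : ℕ → Ω → ℝ} (hY : ∀ j ≤ n, Integrable (Y j) P)
    (hπ : ∀ j ≤ n, π j =ᵐ[P] P[Y j | G j])
    (hw_meas : ∀ j ≤ n, AEStronglyMeasurable[G j] (w j) P) (hw_bdd : ∀ j ≤ n, MemLp (w j) ⊤ P)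
    (hp_meas : ∀ j ≤ n, Measurable[G j] (p j)) (hp_bdd : ∀ j ≤ n, MemLp (p j) ⊤ P) :
    ∫ x, rho n Y w p x ∂P = ∫ x, ∏ j ∈ range (n + 1), p j x ∂P
      - ∑ j ∈ range (n + 1), ∫ x, (p j x - π j x) * (w j x * ∏ k ∈ range j, p k x) ∂P := by
  have hprod_bdd : ∀ j ≤ n + 1, MemLp (fun x => ∏ k ∈ range j, p k x) ⊤ P := fun j hj =>
    MemLp.finset_prod_top fun k hk => hp_bdd k (by rw [mem_range] at hk; omega)
  have hterm : ∀ j ∈ range (n + 1),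
      Integrable (fun x => (Y j x - p j x) * w j x * ∏ k ∈ range j, p k x) P ∧
      ∫ x, (Y j x - p j x) * w j x * ∏ k ∈ range j, p k x ∂P
        = -∫ x, (p j x - π j x) * (w j x * ∏ k ∈ range j, p k x) ∂P := by
    intro j hj
    rw [mem_range, Nat.lt_succ_iff] at hj
    set h : Ω → ℝ := fun x => w j x * ∏ k ∈ range j, p k x
    have hh_meas : AEStronglyMeasurable[G j] h P := (hw_meas j hj).mul
      (measurable_prod_range_of_monotone hG_mono fun k hk => hp_meas k (by omega)).aestronglyMeasurable
    have hh_bdd : MemLp h ⊤ P := (hprod_bdd j (by omega)).mul' (hw_bdd j hj)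
    have hπ_int : Integrable (π j) P := integrable_condExp.congr (hπ j hj).symm
    have hYπ : Integrable (fun x => (Y j x - π j x) * h x) P :=
      ((hY j hj).sub hπ_int).mul_of_top_left hh_bdd
    have hpπ : Integrable (fun x => (p j x - π j x) * h x) P :=
      (((hp_bdd j hj).integrable le_top).sub hπ_int).mul_of_top_left hh_bdd
    have horth : ∫ x, (Y j x - π j x) * h x ∂P = 0 := by
      rw [← integral_sub_condExp_mul_eq_zero (hG_le j) (hY j hj) hh_meas hh_bdd]
      refine integral_congr_ae ?_
      filter_upwards [hπ j hj] with x hx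
      rw [hx]
    have hsplit : (fun x => (Y j x - p j x) * w j x * ∏ k ∈ range j, p k x)
        = fun x => (Y j x - π j x) * h x - (p j x - π j x) * h x := by
      funext x; ring
    rw [hsplit]
    exact ⟨hYπ.sub hpπ, by rw [integral_sub hYπ hpπ, horth, zero_sub]⟩
  rw [sub_eq_add_neg, ← sum_neg_distrib, ← sum_congr rfl fun j hj => (hterm j hj).2,
    ← integral_finsetSum _ fun j hj => (hterm j hj).1]
  exact integral_add ((hprod_bdd (n + 1) le_rfl).integrable le_top)
    (integrable_finsetSum _ fun j hj => (hterm j hj).1)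

theorem integral_prod_range_ite_add {n j₀ : ℕ} {π : ℕ → Ω → ℝ} {δ : Ω → ℝ}
    (hπ_bdd : ∀ j ≤ n, MemLp (π j) ⊤ P) (hj₀ : j₀ ≤ n) (hδ_bdd : MemLp δ ⊤ P) :
    ∫ x, ∏ j ∈ range (n + 1), (if j = j₀ then fun x => π j x + δ x else π j) x ∂P
      = ∫ x, ∏ j ∈ range (n + 1), π j x ∂P
        + ∫ x, δ x * (∏ k ∈ range j₀, π k x) * ∏ k ∈ Icc (j₀ + 1) n, π k x ∂P := by
  have hprod_bdd : ∀ s : Finset ℕ, (∀ k ∈ s, k ≤ n) → MemLp (fun x => ∏ k ∈ s, π k x) ⊤ P :=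
    fun s hs => MemLp.finset_prod_top fun k hk => hπ_bdd k (hs k hk)
  have hbefore : ∀ j ≤ n + 1, MemLp (fun x => ∏ k ∈ range j, π k x) ⊤ P :=
    fun j hj => hprod_bdd _ fun k hk => by rw [mem_range] at hk; omega
  have hafter : Integrable (fun x => ∏ k ∈ Icc (j₀ + 1) n, π k x) P :=
    (hprod_bdd _ fun k hk => (mem_Icc.1 hk).2).integrable le_top
  have hδ_before : MemLp (fun x => δ x * ∏ k ∈ range j₀, π k x) ⊤ P :=
    (hbefore j₀ (by omega)).mul' hδ_bdd
  simp only [ite_apply, prod_range_succ_ite_add _ _ hj₀]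
  exact integral_add ((hbefore (n + 1) le_rfl).integrable le_top)
    (hafter.mul_of_top_right hδ_before)

theorem integral_rho_ite_add (hG_mono : Monotone G) (hG_le : ∀ j, G j ≤ m0) {n j₀ : ℕ}
    {Y π w : ℕ → Ω → ℝ} {δ : Ω → ℝ} (hY : ∀ j ≤ n, Integrable (Y j) P)
    (hπ : ∀ j ≤ n, π j =ᵐ[P] P[Y j | G j])
    (hπ_meas : ∀ j ≤ n, Measurable[G j] (π j)) (hπ_bdd : ∀ j ≤ n, MemLp (π j) ⊤ P)
    (hw_meas : ∀ j ≤ n, AEStronglyMeasurable[G j] (w j) P) (hw_bdd : ∀ j ≤ n, MemLp (w j) ⊤ P)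
    (hj₀ : j₀ ≤ n) (hw₀ : w j₀ =ᵐ[P] P[fun x => ∏ k ∈ Icc (j₀ + 1) n, π k x | G j₀])
    (hδ_meas : Measurable[G j₀] δ) (hδ_bdd : MemLp δ ⊤ P) :
    ∫ x, rho n Y w (fun j => if j = j₀ then fun x => π j x + δ x else π j) x ∂P
      = ∫ x, ∏ j ∈ range (n + 1), π j x ∂P := by
  set π' : ℕ → Ω → ℝ := fun j => if j = j₀ then fun x => π j x + δ x else π j
  have hπ'_meas : ∀ j ≤ n, Measurable[G j] (π' j) := by
    intro j hj
    by_cases h : j = j₀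
    · subst h; simp only [π', if_pos rfl]; exact (hπ_meas j hj).add hδ_meas
    · simpa [π', h] using hπ_meas j hj
  have hπ'_bdd : ∀ j ≤ n, MemLp (π' j) ⊤ P := by
    intro j hj
    by_cases h : j = j₀
    · subst h; simp only [π', if_pos rfl]; exact (hπ_bdd j hj).add hδ_bdd
    · simpa [π', h] using hπ_bdd j hj
  set before : Ω → ℝ := fun x => δ x * ∏ k ∈ range j₀, π k x
  set after : Ω → ℝ := fun x => ∏ k ∈ Icc (j₀ + 1) n, π k x
  have hbefore_meas : Measurable[G j₀] before := hδ_meas.mul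
    (measurable_prod_range_of_monotone hG_mono fun k hk => hπ_meas k (by omega))
  have hbefore_bdd : MemLp before ⊤ P :=
    (MemLp.finset_prod_top fun k hk => hπ_bdd k (by rw [mem_range] at hk; omega)).mul' hδ_bdd
  have hafter_int : Integrable after P :=
    (MemLp.finset_prod_top fun k hk => hπ_bdd k (mem_Icc.1 hk).2).integrable le_top
  have hsum : ∑ j ∈ range (n + 1), ∫ x, (π' j x - π j x) * (w j x * ∏ k ∈ range j, π' k x) ∂P
      = ∫ x, before x * w j₀ x ∂P := by
    rw [sum_eq_single_of_mem j₀ (mem_range.2 (by omega)) fun j _ hj => by simp [π', hj]]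
    refine integral_congr_ae (.of_forall fun x => ?_)
    simp only [π', before, ite_apply, if_pos]
    rw [prod_congr rfl fun k hk => if_neg (by rw [mem_range] at hk; omega)]
    ring
  have htower : ∫ x, before x * w j₀ x ∂P = ∫ x, before x * after x ∂P := by
    rw [← integral_mul_condExp (hG_le j₀) hbefore_meas.aestronglyMeasurable
      (hafter_int.mul_of_top_right hbefore_bdd) hafter_int]
    refine integral_congr_ae ?_
    filter_upwards [hw₀] with x hx
    rw [hx]
  rw [integral_rho hG_mono hG_le hY hπ hw_meas hw_bdd hπ'_meas hπ'_bdd, hsum, htower,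
    integral_prod_range_ite_add hπ_bdd hj₀ hδ_bdd]
  ring

end Rho

theorem rho_orthogonal_propensity_general
    {Ω : Type*} {F : MeasurableSpace Ω} {P : Measure Ω} [IsProbabilityMeasure P]
    (n : ℕ) (G : ℕ → MeasurableSpace Ω) (hG_mono : Monotone G) (hG_le : ∀ j, G j ≤ F)
    (A : ℕ → Set Ω) (hA : ∀ j ≤ n, MeasurableSet[G (j + 1)] (A j))
    (π : ℕ → Ω → ℝ) (hπ_meas : ∀ j ≤ n, Measurable[G j] (π j))
    (hπ_ce : ∀ j ≤ n, π j =ᵐ[P] P[(A j).indicator (fun _ => (1 : ℝ)) | G j])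
    (w : ℕ → Ω → ℝ)
    (hw : ∀ j < n, w j =ᵐ[P] P[fun x => ∏ k ∈ Icc (j + 1) n, π k x | G j])
    (hw_n : w n = fun _ => (1 : ℝ))
    (j₀ : ℕ) (hj₀ : j₀ ≤ n)
    (δ : Ω → ℝ) (hδ_meas : Measurable[G j₀] δ) (Cδ : ℝ) (hδ_bd : ∀ x, |δ x| ≤ Cδ)
    (π' : ℕ → Ω → ℝ)
    (hπ' : π' = fun j => if j = j₀ then (fun x => π j x + δ x) else π j)
    (ρ ρ' : Ω → ℝ)
    (hρ : ρ = fun x =>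
      (∏ j ∈ range (n + 1), π j x)
      + ∑ j ∈ range (n + 1),
          ((A j).indicator (fun _ => (1 : ℝ)) x - π j x) * w j x * ∏ k ∈ range j, π k x)
    (hρ' : ρ' = fun x =>
      (∏ j ∈ range (n + 1), π' j x)
      + ∑ j ∈ range (n + 1),
          ((A j).indicator (fun _ => (1 : ℝ)) x - π' j x) * w j x
            * ∏ k ∈ range j, π' k x) :
    ∫ x, ρ' x ∂P = ∫ x, ρ x ∂P := by
  set Y : ℕ → Ω → ℝ := fun j => (A j).indicator fun _ => 1
  have hY_bdd : ∀ j ≤ n, MemLp (Y j) ⊤ P := fun j hj =>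
    memLp_indicator_const ⊤ (hG_le _ _ (hA j hj)) 1 (.inr (measure_ne_top P _))
  have hY : ∀ j ≤ n, Integrable (Y j) P := fun j hj => (hY_bdd j hj).integrable le_top
  have hπ_bdd : ∀ j ≤ n, MemLp (π j) ⊤ P := fun j hj =>
    ((hY_bdd j hj).condExp le_top).ae_eq (hπ_ce j hj).symm
  have hw' : ∀ j ≤ n, w j =ᵐ[P] P[fun x => ∏ k ∈ Icc (j + 1) n, π k x | G j] :=
    fun j => ae_eq_condExp_prod_Icc_of_le hG_le hw hw_n
  have hw_bdd : ∀ j ≤ n, MemLp (w j) ⊤ P := fun j hj =>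
    ((MemLp.finset_prod_top fun k hk => hπ_bdd k (mem_Icc.1 hk).2).condExp le_top).ae_eq
      (hw' j hj).symm
  have hw_meas : ∀ j ≤ n, AEStronglyMeasurable[G j] (w j) P := fun j hj =>
    stronglyMeasurable_condExp.aestronglyMeasurable.congr (hw' j hj).symm
  have hδ_bdd : MemLp δ ⊤ P := memLp_top_of_bound
    (hδ_meas.mono (hG_le j₀) le_rfl).aestronglyMeasurable Cδ (.of_forall hδ_bd)
  subst hπ' hρ hρ'
  calc ∫ x, rho n Y w _ x ∂P = ∫ x, ∏ j ∈ range (n + 1), π j x ∂P :=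
        integral_rho_ite_add hG_mono hG_le hY hπ_ce hπ_meas hπ_bdd hw_meas hw_bdd hj₀ (hw' j₀ hj₀)
          hδ_meas hδ_bdd
    _ = ∫ x, rho n Y w π x ∂P := by
        simp [integral_rho hG_mono hG_le hY hπ_ce hw_meas hw_bdd hπ_meas hπ_bdd]

/-- **Insensitivity in expectation of ρ to perturbations of a single propensity-score
nuisance with the weight functions held at their true values (Lemma B.2).**
With the true weight functions `w_j := E[∏_{k=j+1}^{n} π_k | 𝒢_j]` for `j < n` and
`w_n := 1`, fix `j₀ ∈ {0,…,n}` and a bounded `𝒢_{j₀}`-measurable `δ`, and let `ρ̃` be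
obtained from `ρ := ∏_{j=0}^{n} π_j + Σ_{j=0}^{n} (1_{A_j} − π_j)·w_j·∏_{k<j} π_k`
by replacing `π_{j₀}` with `π_{j₀} + δ` in every occurrence (the `w_j` held fixed).
Then `∫ ρ̃ dP = ∫ ρ dP`. Since `ρ` is affine in `π_{j₀}`, this exact invariance expresses
the Neyman-orthogonality of `ρ` with respect to the propensity scores. -/
theorem rho_orthogonal_propensity
    {Ω : Type*} {F : MeasurableSpace Ω} {P : Measure Ω} [IsProbabilityMeasure P]
    (n : ℕ) (G : ℕ → MeasurableSpace Ω) (hG_mono : Monotone G) (hG_le : ∀ j, G j ≤ F)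
    (A : ℕ → Set Ω) (hA : ∀ j ≤ n, MeasurableSet[G (j + 1)] (A j))
    (π : ℕ → Ω → ℝ) (hπ_meas : ∀ j ≤ n, Measurable[G j] (π j))
    (ε : ℝ) (hε : 0 < ε) (hπ_bd : ∀ j ≤ n, ∀ᵐ x ∂P, ε ≤ π j x ∧ π j x ≤ 1)
    (hπ_ce : ∀ j ≤ n, π j =ᵐ[P] P[(A j).indicator (fun _ => (1 : ℝ)) | G j])
    (w : ℕ → Ω → ℝ)
    (hw : ∀ j < n, w j =ᵐ[P] P[fun x => ∏ k ∈ Icc (j + 1) n, π k x | G j])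
    (hw_n : w n = fun _ => (1 : ℝ))
    (j₀ : ℕ) (hj₀ : j₀ ≤ n)
    (δ : Ω → ℝ) (hδ_meas : Measurable[G j₀] δ) (Cδ : ℝ) (hδ_bd : ∀ x, |δ x| ≤ Cδ)
    (π' : ℕ → Ω → ℝ)
    (hπ' : π' = fun j => if j = j₀ then (fun x => π j x + δ x) else π j)
    (ρ ρ' : Ω → ℝ)
    (hρ : ρ = fun x =>
      (∏ j ∈ range (n + 1), π j x)
      + ∑ j ∈ range (n + 1),
          ((A j).indicator (fun _ => (1 : ℝ)) x - π j x) * w j x * ∏ k ∈ range j, π k x)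
    (hρ' : ρ' = fun x =>
      (∏ j ∈ range (n + 1), π' j x)
      + ∑ j ∈ range (n + 1),
          ((A j).indicator (fun _ => (1 : ℝ)) x - π' j x) * w j x
            * ∏ k ∈ range j, π' k x) :
    ∫ x, ρ' x ∂P = ∫ x, ρ x ∂P :=
  rho_orthogonal_propensity_general n G hG_mono hG_le A hA π hπ_meas hπ_ce w hw hw_n j₀ hj₀ δ
    hδ_meas Cδ hδ_bd π' hπ' ρ ρ' hρ hρ'
end
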